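/- arXiv:2605.30687 — 5 statements merged into one kernel-verified Lean document; each statement's English description precedes it below -/
import Mathlib

section
/- From distance discrepancy to orbit distance under well-conditioning (Lemma A.7). Fix d ≥ 1 and α > 0. There exists a constant c₂ = c₂(α, d) > 0 such that for all n and all X⋆, X ∈ ([0,1]^d)ⁿ: if the smallest singular value of the centered configuration satisfies s_min(X_c⋆) ≥ α√n, then d_G(X, X⋆)² ≤ c₂ · Δ_dist(X, X⋆), where Δ_dist(X, X⋆) = N⁻¹ Σ_{i<j} (‖x_i − x_j‖ − ‖x_i⋆ − x_j⋆‖)². -/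
set_option maxHeartbeats 1000000


open MeasureTheory ProbabilityTheory Filter

noncomputable section

/-- The standard normal probability density function φ. -/
def stdPDF (x : ℝ) : ℝ := Real.exp (-(x ^ 2) / 2) / Real.sqrt (2 * Real.pi)

/-- The standard normal cumulative distribution function Φ. -/
def stdCDF (x : ℝ) : ℝ := ∫ t in Set.Iic x, stdPDF t

/-- The standard Gaussian measure on ℝ. -/
def stdGaussian : Measure ℝ := gaussianReal 0 1

/-- `T_M([u]₊) = min{max{u,0}, M}`. -/
def capPos (M u : ℝ) : ℝ := min M (max u 0)

/-- The density `q_{M,r}(y)` of the capped observation with respect to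
`ν = δ₀ + Leb|_(0,M) + δ_M`. -/
def qDen (σ M r y : ℝ) : ℝ :=
  if y = 0 then stdCDF (-r / σ)
  else if y = M then 1 - stdCDF ((M - r) / σ)
  else σ⁻¹ * stdPDF ((y - r) / σ)

/-- The loss `ℓ_M(y, r) = - log q_{M,r}(y)`. -/
def lossM (σ M y r : ℝ) : ℝ := - Real.log (qDen σ M r y)

/-- The reference measure `ν = δ₀ + Leb|_(0,M) + δ_M`. -/
def refMeas (M : ℝ) : Measure ℝ :=
  Measure.dirac 0 + volume.restrict (Set.Ioo 0 M) + Measure.dirac M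

/-- The law `P_r` of the capped observation `T_M([r + σZ]₊)`. -/
def cappedLaw (σ M r : ℝ) : Measure ℝ :=
  Measure.map (fun z => capPos M (r + σ * z)) stdGaussian

/-- The capped mean `μ_M(r) = E[T_M([r + σZ]₊)]`. -/
def cappedMean (σ M r : ℝ) : ℝ := ∫ z, capPos M (r + σ * z) ∂stdGaussian

/-- The population loss `g(r; r⋆) = E[ℓ_M(T_M([r⋆+σZ]₊), r)]`. -/
def popLoss (σ M r rstar : ℝ) : ℝ :=
  ∫ z, lossM σ M (capPos M (rstar + σ * z)) r ∂stdGaussian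

/-- Euclidean distance on `Fin d → ℝ`. -/
def eDist {d : ℕ} (x y : Fin d → ℝ) : ℝ := Real.sqrt (∑ k, (x k - y k) ^ 2)

/-- The cube `([0,1]^d)^n` of configurations of `n` points. -/
def cube (n d : ℕ) : Set (Fin n → Fin d → ℝ) :=
  {X | ∀ i k, X i k ∈ Set.Icc (0 : ℝ) 1}

/-- Number of unordered pairs `N = n(n-1)/2` as a real. -/
def numPairs (n : ℕ) : ℝ := (n : ℝ) * ((n : ℝ) - 1) / 2

/-- Sum over unordered pairs `i < j`. -/
def pairSum {n : ℕ} (f : Fin n → Fin n → ℝ) : ℝ :=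
  ∑ i : Fin n, ∑ j : Fin n, if i < j then f i j else 0

/-- The pairwise distances `r_{ij}(X) = ‖x_i - x_j‖`. -/
def rdist {n d : ℕ} (X : Fin n → Fin d → ℝ) (i j : Fin n) : ℝ := eDist (X i) (X j)

/-- The capped dissimilarities `D̃_{ij} = T_M([r⋆_{ij} + σ Z_{ij}]₊)`. -/
def cappedD {n d : ℕ} (σ M : ℝ) (Xstar : Fin n → Fin d → ℝ) (Z : Fin n → Fin n → ℝ)
    (i j : Fin n) : ℝ := capPos M (rdist Xstar i j + σ * Z i j)

/-- The empirical risk `Rₙ(X)`. -/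
def empRisk {n d : ℕ} (σ M : ℝ) (Dt : Fin n → Fin n → ℝ) (X : Fin n → Fin d → ℝ) : ℝ :=
  (numPairs n)⁻¹ * pairSum fun i j => lossM σ M (Dt i j) (rdist X i j)

/-- The population risk `Rₙ⁰(X)`. -/
def popRisk {n d : ℕ} (σ M : ℝ) (Xstar X : Fin n → Fin d → ℝ) : ℝ :=
  (numPairs n)⁻¹ * pairSum fun i j => popLoss σ M (rdist X i j) (rdist Xstar i j)

/-- The distance discrepancy `Δ_dist(X, X⋆)`. -/
def distDiscrep {n d : ℕ} (X Xstar : Fin n → Fin d → ℝ) : ℝ :=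
  (numPairs n)⁻¹ * pairSum fun i j => (rdist X i j - rdist Xstar i j) ^ 2

/-- The centering matrix `J = I - n⁻¹ 11ᵀ`. -/
def centerMat (n : ℕ) : Matrix (Fin n) (Fin n) ℝ :=
  1 - ((n : ℝ)⁻¹) • Matrix.of (fun _ _ => (1 : ℝ))

/-- A configuration viewed as an `n × d` matrix. -/
def toMat {n d : ℕ} (X : Fin n → Fin d → ℝ) : Matrix (Fin n) (Fin d) ℝ := Matrix.of X

/-- The Frobenius norm of a matrix. -/
def frobNorm {m k : Type*} [Fintype m] [Fintype k] (A : Matrix m k ℝ) : ℝ :=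
  Real.sqrt (∑ i, ∑ j, (A i j) ^ 2)

/-- The squared-distance matrix `D²(X)`. -/
def sqDistMat {n d : ℕ} (X : Fin n → Fin d → ℝ) : Matrix (Fin n) (Fin n) ℝ :=
  Matrix.of fun i j => (rdist X i j) ^ 2

/-- The centered Gram matrix `G(X) = -(1/2) J D²(X) J`. -/
def gramMat {n d : ℕ} (X : Fin n → Fin d → ℝ) : Matrix (Fin n) (Fin n) ℝ :=
  (-(1 / 2 : ℝ)) • (centerMat n * sqDistMat X * centerMat n)

/-- The smallest singular value of an `n × d` matrix: the infimum of `‖Av‖` over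
unit vectors `v`. -/
def sMin {n d : ℕ} (A : Matrix (Fin n) (Fin d) ℝ) : ℝ :=
  sInf {t | ∃ v : Fin d → ℝ, ∑ k, v k ^ 2 = 1 ∧ t = Real.sqrt (∑ i, (A.mulVec v i) ^ 2)}

/-- The orbit distance `d_G(X, X⋆)`. -/
def orbitDist {n d : ℕ} (X Xstar : Fin n → Fin d → ℝ) : ℝ :=
  sInf {t | ∃ Q : Matrix (Fin d) (Fin d) ℝ, Q ∈ Matrix.orthogonalGroup (Fin d) ℝ ∧
    t = (Real.sqrt n)⁻¹ *
      frobNorm (centerMat n * toMat X - centerMat n * toMat Xstar * Q)}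

/-- The uniform distribution on `[0,1]^d`. -/
def uniformCube (d : ℕ) : Measure (Fin d → ℝ) :=
  Measure.pi fun _ => volume.restrict (Set.Icc 0 1)

/-- The design measure: `n` i.i.d. uniform points on `[0,1]^d`. -/
def designMeasure (n d : ℕ) : Measure (Fin n → Fin d → ℝ) :=
  Measure.pi fun _ => uniformCube d

/-- The noise measure: i.i.d. standard Gaussian entries. -/
def noiseMeasure (n : ℕ) : Measure (Fin n → Fin n → ℝ) :=
  Measure.pi fun _ => Measure.pi fun _ => stdGaussian

/-- The joint law of `(X⋆, Z)`. -/
def jointMeasure (n d : ℕ) :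
    Measure ((Fin n → Fin d → ℝ) × (Fin n → Fin n → ℝ)) :=
  (designMeasure n d).prod (noiseMeasure n)

/-- The prior measure (supported on the cube, with Lebesgue density `π₀`). -/
def priorMeas (d : ℕ) (pri : (n : ℕ) → (Fin n → Fin d → ℝ) → ℝ) (n : ℕ) :
    Measure (Fin n → Fin d → ℝ) :=
  ((volume : Measure (Fin n → Fin d → ℝ)).restrict (cube n d)).withDensity
    fun X => ENNReal.ofReal (pri n X)

/-- The (normalized) Gibbs measure ∝ `prior(dX) exp(-N R(X))`. -/
def gibbs {S : Type*} [MeasurableSpace S] (prior : Measure S) (R : S → ℝ) (Nn : ℝ) :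
    Measure S :=
  ((prior.withDensity fun X => ENNReal.ofReal (Real.exp (-Nn * R X))) Set.univ)⁻¹ •
    prior.withDensity fun X => ENNReal.ofReal (Real.exp (-Nn * R X))

/-- Total variation distance between measures. -/
def tvDist {S : Type*} [MeasurableSpace S] (μ ν : Measure S) : ℝ :=
  ⨆ A : {A : Set S // MeasurableSet A}, |(μ A).toReal - (ν A).toReal|

/-- `m`-step iterate of a Markov kernel. -/
def kIter {S : Type*} [MeasurableSpace S] (P : Kernel S S) : ℕ → Kernel S S
  | 0 => Kernel.id
  | m + 1 => Kernel.comp P (kIter P m)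


namespace LemA7
open Matrix

variable {m k l : Type*} [Fintype m] [Fintype k] [Fintype l]

def fsq (A : Matrix m k ℝ) : ℝ := ∑ i, ∑ j, A i j ^ 2

lemma fsq_nonneg (A : Matrix m k ℝ) : 0 ≤ fsq A :=
  Finset.sum_nonneg fun _ _ => Finset.sum_nonneg fun _ _ => sq_nonneg _

lemma fsq_transpose (A : Matrix m k ℝ) : fsq Aᵀ = fsq A := by
  rw [fsq, fsq, Finset.sum_comm]
  simp [Matrix.transpose_apply]

lemma fsq_eq_trace (A : Matrix m k ℝ) : fsq A = (Aᵀ * A).trace := by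
  rw [fsq, Finset.sum_comm]
  simp [Matrix.trace, Matrix.diag, Matrix.mul_apply, sq]

lemma fsq_smul (c : ℝ) (A : Matrix m k ℝ) : fsq (c • A) = c ^ 2 * fsq A := by
  simp [fsq, Matrix.smul_apply, mul_pow, Finset.mul_sum]

lemma fsq_mul_le (A : Matrix m k ℝ) (B : Matrix k l ℝ) : fsq (A * B) ≤ fsq A * fsq B := by
  calc fsq (A * B) ≤ ∑ i, ∑ j, (∑ t, A i t ^ 2) * (∑ t, B t j ^ 2) := by
        refine Finset.sum_le_sum fun i _ => Finset.sum_le_sum fun j _ => ?_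
        simpa [Matrix.mul_apply] using
          Finset.sum_mul_sq_le_sq_mul_sq Finset.univ (A i) (fun t => B t j)
    _ = (∑ i, ∑ t, A i t ^ 2) * (∑ j : l, ∑ t, B t j ^ 2) := by
        rw [Finset.sum_mul_sum]
    _ = fsq A * fsq B := by
        rw [fsq, fsq]; congr 1; exact Finset.sum_comm

lemma dot_transpose_mul_self (A : Matrix m k ℝ) (x : k → ℝ) :
    x ⬝ᵥ (Aᵀ * A) *ᵥ x = ∑ i, (A *ᵥ x) i ^ 2 := by
  rw [← Matrix.mulVec_mulVec, Matrix.dotProduct_mulVec, Matrix.vecMul_transpose]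
  simp [dotProduct, sq]

lemma trace_conj_nonneg (N : Matrix m m ℝ) (A : Matrix m k ℝ)
    (hN : ∀ x : m → ℝ, 0 ≤ x ⬝ᵥ N *ᵥ x) : 0 ≤ (Aᵀ * N * A).trace := by
  have h : (Aᵀ * N * A).trace = ∑ j, (fun i => A i j) ⬝ᵥ N *ᵥ (fun i => A i j) := by
    simp only [Matrix.trace, Matrix.diag, Matrix.mul_apply, dotProduct, Matrix.mulVec,
      Finset.sum_mul, Finset.mul_sum, Matrix.transpose_apply]
    refine Finset.sum_congr rfl fun j _ => ?_
    rw [Finset.sum_comm]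
    refine Finset.sum_congr rfl fun i _ => Finset.sum_congr rfl fun t _ => by ring
  rw [h]
  exact Finset.sum_nonneg fun j _ => hN _

lemma fsq_mul_proj_le [DecidableEq k] (A : Matrix m k ℝ) (P : Matrix k k ℝ)
    (hs : Pᵀ = P) (hi : P * P = P) : fsq (A * P) ≤ fsq A := by
  have key : fsq A - fsq (A * P) = ((1 - P)ᵀ * (Aᵀ * A) * (1 - P)).trace := by
    rw [fsq_eq_trace, fsq_eq_trace, Matrix.transpose_mul, Matrix.transpose_sub,
      Matrix.transpose_one, hs]
    have h1 : (Pᵀ * Aᵀ) * (A * P) = P * (Aᵀ * A) * P := by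
      rw [hs]; simp only [Matrix.mul_assoc]
    rw [hs] at h1
    rw [h1]
    have e1 : (1 - P) * (Aᵀ * A) * (1 - P)
        = Aᵀ * A - P * (Aᵀ * A) - (Aᵀ * A) * P + P * (Aᵀ * A) * P := by
      simp only [Matrix.sub_mul, Matrix.mul_sub, Matrix.one_mul, Matrix.mul_one]
      abel
    rw [e1, Matrix.trace_add, Matrix.trace_sub, Matrix.trace_sub]
    have c1 : (P * (Aᵀ * A)).trace = ((Aᵀ * A) * P).trace := Matrix.trace_mul_comm _ _
    have c2 : (P * (Aᵀ * A) * P).trace = ((Aᵀ * A) * P).trace := by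
      rw [Matrix.trace_mul_comm, ← Matrix.mul_assoc, hi]
      exact Matrix.trace_mul_comm _ _
    rw [c1, c2]; ring
  have hnn : 0 ≤ ((1 - P)ᵀ * (Aᵀ * A) * (1 - P)).trace := by
    refine trace_conj_nonneg _ _ fun x => ?_
    rw [dot_transpose_mul_self]
    exact Finset.sum_nonneg fun _ _ => sq_nonneg _
  linarith

lemma fsq_proj_mul_le [DecidableEq m] (A : Matrix m k ℝ) (P : Matrix m m ℝ)
    (hs : Pᵀ = P) (hi : P * P = P) : fsq (P * A) ≤ fsq A := by
  have := fsq_mul_proj_le Aᵀ P hs hi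
  calc fsq (P * A) = fsq ((P * A)ᵀ) := (fsq_transpose _).symm
    _ = fsq (Aᵀ * P) := by rw [Matrix.transpose_mul, hs]
    _ ≤ fsq Aᵀ := this
    _ = fsq A := fsq_transpose _

lemma fsq_orth_mul [DecidableEq m] (Q : Matrix m m ℝ) (hQ : Qᵀ * Q = 1) (A : Matrix m k ℝ) :
    fsq (Q * A) = fsq A := by
  rw [fsq_eq_trace, fsq_eq_trace, Matrix.transpose_mul, Matrix.mul_assoc,
    ← Matrix.mul_assoc Qᵀ Q A, hQ]
  simp

lemma quad_abs_le (M : Matrix m m ℝ) (x : m → ℝ) :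
    |x ⬝ᵥ M *ᵥ x| ≤ Real.sqrt (fsq M) * ∑ i, x i ^ 2 := by
  have h1 : (x ⬝ᵥ M *ᵥ x) ^ 2 ≤ fsq M * (∑ i, x i ^ 2) ^ 2 := by
    have cs1 : (x ⬝ᵥ M *ᵥ x) ^ 2 ≤ (∑ i, x i ^ 2) * (∑ i, (M *ᵥ x) i ^ 2) := by
      simpa [dotProduct] using Finset.sum_mul_sq_le_sq_mul_sq Finset.univ x (M *ᵥ x)
    have cs2 : ∑ i, (M *ᵥ x) i ^ 2 ≤ fsq M * ∑ i, x i ^ 2 := by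
      rw [fsq, Finset.sum_mul]
      refine Finset.sum_le_sum fun i _ => ?_
      simpa [Matrix.mulVec, dotProduct] using
        Finset.sum_mul_sq_le_sq_mul_sq Finset.univ (M i) x
    have hx : (0:ℝ) ≤ ∑ i, x i ^ 2 := Finset.sum_nonneg fun _ _ => sq_nonneg _
    calc (x ⬝ᵥ M *ᵥ x) ^ 2 ≤ (∑ i, x i ^ 2) * (∑ i, (M *ᵥ x) i ^ 2) := cs1
      _ ≤ (∑ i, x i ^ 2) * (fsq M * ∑ i, x i ^ 2) := by
          exact mul_le_mul_of_nonneg_left cs2 hx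
      _ = fsq M * (∑ i, x i ^ 2) ^ 2 := by ring
  have hx : (0:ℝ) ≤ ∑ i, x i ^ 2 := Finset.sum_nonneg fun _ _ => sq_nonneg _
  have := Real.sqrt_le_sqrt h1
  rw [Real.sqrt_sq_eq_abs] at this
  calc |x ⬝ᵥ M *ᵥ x| ≤ Real.sqrt (fsq M * (∑ i, x i ^ 2) ^ 2) := this
    _ = Real.sqrt (fsq M) * ∑ i, x i ^ 2 := by
        rw [Real.sqrt_mul (fsq_nonneg M), Real.sqrt_sq hx]

omit [Fintype m] in
lemma herm_transpose {M : Matrix m m ℝ} (h : M.IsHermitian) : Mᵀ = M := by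
  calc Mᵀ = Mᴴ := by ext i j; simp [Matrix.conjTranspose_apply]
    _ = M := h


lemma sum_sq_pos_of_ne_zero {d : ℕ} {v : Fin d → ℝ} (hv : v ≠ 0) :
    0 < ∑ k, v k ^ 2 := by
  obtain ⟨k, hk⟩ := Function.ne_iff.mp hv
  refine Finset.sum_pos' (fun _ _ => sq_nonneg _) ⟨k, Finset.mem_univ k, ?_⟩
  exact lt_of_le_of_ne (sq_nonneg _) (Ne.symm (pow_ne_zero _ hk))

lemma fsq_gram_comm {d : ℕ} (T : Matrix (Fin d) (Fin d) ℝ) :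
    fsq (Tᵀ * T - 1) = fsq (T * Tᵀ - 1) := by
  have h1 : ∀ M : Matrix (Fin d) (Fin d) ℝ, Mᵀ = M →
      fsq (M - 1) = (M * M).trace - 2 * M.trace + (1 : Matrix (Fin d) (Fin d) ℝ).trace := by
    intro M hM
    rw [fsq_eq_trace, Matrix.transpose_sub, Matrix.transpose_one, hM, Matrix.sub_mul,
      Matrix.mul_sub, Matrix.mul_sub, Matrix.one_mul, Matrix.mul_one,
      Matrix.trace_sub, Matrix.trace_sub, Matrix.trace_sub]
    ring
  rw [h1 _ (by rw [Matrix.transpose_mul, Matrix.transpose_transpose]),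
    h1 _ (by rw [Matrix.transpose_mul, Matrix.transpose_transpose])]
  have e1 : (Tᵀ * T * (Tᵀ * T)).trace = (T * Tᵀ * (T * Tᵀ)).trace := by
    rw [show Tᵀ * T * (Tᵀ * T) = Tᵀ * (T * Tᵀ * T) by simp only [Matrix.mul_assoc],
      Matrix.trace_mul_comm,
      show T * Tᵀ * T * Tᵀ = T * Tᵀ * (T * Tᵀ) by simp only [Matrix.mul_assoc]]
  have e2 : (Tᵀ * T).trace = (T * Tᵀ).trace := Matrix.trace_mul_comm _ _
  rw [e1, e2]

lemma sqrt_contract {d : ℕ} (S : Matrix (Fin d) (Fin d) ℝ) (hSym : Sᵀ = S)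
    (hPSD : ∀ x : Fin d → ℝ, 0 ≤ x ⬝ᵥ S *ᵥ x) : fsq (S - 1) ≤ fsq (S * S - 1) := by
  have hid : (S * S - 1) * (S * S - 1) - (S - 1) * (S - 1)
      = (S - 1) * (S * S + S + S) * (S - 1) := by noncomm_ring
  have hfa : fsq (S - 1) = ((S - 1) * (S - 1)).trace := by
    rw [fsq_eq_trace, Matrix.transpose_sub, Matrix.transpose_one, hSym]
  have hfb : fsq (S * S - 1) = ((S * S - 1) * (S * S - 1)).trace := by
    rw [fsq_eq_trace, Matrix.transpose_sub, Matrix.transpose_one, Matrix.transpose_mul, hSym]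
  have hnn : 0 ≤ ((S - 1)ᵀ * (S * S + S + S) * (S - 1)).trace := by
    refine trace_conj_nonneg _ _ fun x => ?_
    rw [Matrix.add_mulVec, Matrix.add_mulVec, dotProduct_add, dotProduct_add]
    have h2 : 0 ≤ x ⬝ᵥ (S * S) *ᵥ x := by
      rw [show S * S = Sᵀ * S by rw [hSym], dot_transpose_mul_self]
      exact Finset.sum_nonneg fun _ _ => sq_nonneg _
    have h3 := hPSD x
    linarith
  rw [show (S - 1)ᵀ = S - 1 by rw [Matrix.transpose_sub, Matrix.transpose_one, hSym]] at hnn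
  have := congrArg Matrix.trace hid
  rw [Matrix.trace_sub] at this
  linarith [hnn, this.ge, this.le]

lemma fsq_add_le {m k : Type*} [Fintype m] [Fintype k] (A B : Matrix m k ℝ) :
    fsq (A + B) ≤ 2 * fsq A + 2 * fsq B := by
  rw [fsq, fsq, fsq, Finset.mul_sum, Finset.mul_sum, ← Finset.sum_add_distrib]
  refine Finset.sum_le_sum fun i _ => ?_
  rw [Finset.mul_sum, Finset.mul_sum, ← Finset.sum_add_distrib]
  refine Finset.sum_le_sum fun j _ => ?_
  have : (A + B) i j = A i j + B i j := rfl
  rw [this]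
  nlinarith [sq_nonneg (A i j - B i j)]

lemma dot_conj {m k : Type*} [Fintype m] [Fintype k] (T : Matrix m k ℝ) (N : Matrix m m ℝ)
    (x : k → ℝ) : x ⬝ᵥ (Tᵀ * N * T) *ᵥ x = (T *ᵥ x) ⬝ᵥ (N *ᵥ (T *ᵥ x)) := by
  rw [← Matrix.mulVec_mulVec, ← Matrix.mulVec_mulVec, Matrix.dotProduct_mulVec,
    Matrix.vecMul_transpose]


open scoped MatrixOrder in
lemma core {n d : ℕ} (Y Ystar : Matrix (Fin n) (Fin d) ℝ) (σ2 : ℝ) (hσ : 0 < σ2)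
    (hBq : ∀ v : Fin d → ℝ, σ2 * (∑ k, v k ^ 2) ≤ v ⬝ᵥ (Ystarᵀ * Ystar) *ᵥ v)
    (hsmall : ((d : ℝ) / σ2) ^ 2 * fsq (Y * Yᵀ - Ystar * Ystarᵀ) ≤ 1 / 4) :
    ∃ Q : Matrix (Fin d) (Fin d) ℝ, Qᵀ * Q = 1 ∧
      fsq (Y - Ystar * Q) ≤
        (2 * fsq Ystar * ((d : ℝ) / σ2) ^ 2 + 4 / σ2) * fsq (Y * Yᵀ - Ystar * Ystarᵀ) := by
  set B : Matrix (Fin d) (Fin d) ℝ := Ystarᵀ * Ystar with hBdef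
  set Δm : Matrix (Fin n) (Fin n) ℝ := Y * Yᵀ - Ystar * Ystarᵀ with hΔdef
  have hYY : Y * Yᵀ = Ystar * Ystarᵀ + Δm := by rw [hΔdef]; abel
  clear_value B Δm
  -- B is invertible
  have hdet : B.det ≠ 0 := by
    intro h0
    obtain ⟨v, hv, hMv⟩ := (Matrix.exists_mulVec_eq_zero_iff).mpr h0
    have h1 := hBq v
    rw [hMv, dotProduct_zero] at h1
    have h2 := sum_sq_pos_of_ne_zero hv
    nlinarith
  have hBu : IsUnit B.det := isUnit_iff_ne_zero.mpr hdet
  have hBB : B * B⁻¹ = 1 := Matrix.mul_nonsing_inv _ hBu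
  have hBB' : B⁻¹ * B = 1 := Matrix.nonsing_inv_mul _ hBu
  have hBsym : Bᵀ = B := by rw [hBdef, Matrix.transpose_mul, Matrix.transpose_transpose]
  have hBisym : (B⁻¹)ᵀ = B⁻¹ := by rw [Matrix.transpose_nonsing_inv, hBsym]
  -- quadratic form bound for B⁻¹
  have hBiq : ∀ x : Fin d → ℝ, 0 ≤ x ⬝ᵥ B⁻¹ *ᵥ x ∧ x ⬝ᵥ B⁻¹ *ᵥ x ≤ (∑ k, x k ^ 2) / σ2 := by
    intro x
    set y : Fin d → ℝ := B⁻¹ *ᵥ x with hy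
    have hxy : B *ᵥ y = x := by rw [hy, Matrix.mulVec_mulVec, hBB, Matrix.one_mulVec]
    have hq : x ⬝ᵥ B⁻¹ *ᵥ x = y ⬝ᵥ (B *ᵥ y) := by
      rw [hxy, ← hy, dotProduct_comm]
    have hlow := hBq y
    have hynn : (0:ℝ) ≤ ∑ k, y k ^ 2 := Finset.sum_nonneg fun _ _ => sq_nonneg _
    have ht0 : 0 ≤ y ⬝ᵥ (B *ᵥ y) := le_trans (by positivity) hlow
    constructor
    · rw [hq]; exact ht0
    · rw [hq]
      -- Cauchy-Schwarz : (y ⬝ᵥ x)^2 ≤ (∑ y^2)(∑ x^2)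
      have hcs : (y ⬝ᵥ x) ^ 2 ≤ (∑ k, y k ^ 2) * (∑ k, x k ^ 2) := by
        simpa [dotProduct] using Finset.sum_mul_sq_le_sq_mul_sq Finset.univ y x
      have hyx : y ⬝ᵥ x = y ⬝ᵥ (B *ᵥ y) := by rw [hxy]
      rw [hyx] at hcs
      set t := y ⬝ᵥ (B *ᵥ y) with htdef
      have hxnn : (0:ℝ) ≤ ∑ k, x k ^ 2 := Finset.sum_nonneg fun _ _ => sq_nonneg _
      -- t^2 ≤ (t/σ2) * ∑ x^2
      rcases eq_or_lt_of_le ht0 with h | h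
      · rw [← h]; positivity
      · have h5 : (∑ k, y k ^ 2) ≤ t / σ2 := by
          rw [le_div_iff₀ hσ]; linarith [hlow]
        have h6 : t ^ 2 ≤ (t / σ2) * (∑ k, x k ^ 2) :=
          le_trans hcs (mul_le_mul_of_nonneg_right h5 hxnn)
        rw [div_mul_eq_mul_div, le_div_iff₀ hσ] at h6
        have h7 : t * (t * σ2) ≤ t * (∑ k, x k ^ 2) := by nlinarith
        have h8 : t * σ2 ≤ ∑ k, x k ^ 2 := (mul_le_mul_iff_right₀ h).mp h7
        rw [le_div_iff₀ hσ]
        exact h8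
  -- trace of B⁻¹
  have hdiag : ∀ i, B⁻¹ i i ≤ 1 / σ2 ∧ 0 ≤ B⁻¹ i i := by
    intro i
    have h := hBiq (Pi.single i 1)
    have h1 : (Pi.single i 1 : Fin d → ℝ) ⬝ᵥ B⁻¹ *ᵥ (Pi.single i 1) = B⁻¹ i i := by
      rw [Matrix.mulVec_single, single_dotProduct]
      simp
    have h2 : (∑ k, (Pi.single i 1 : Fin d → ℝ) k ^ 2) = 1 := by
      simp [Pi.single_apply, sq]
    rw [h1, h2] at h
    exact ⟨h.2, h.1⟩
  have htr : B⁻¹.trace ≤ (d : ℝ) / σ2 := by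
    rw [Matrix.trace]
    calc ∑ i, B⁻¹.diag i ≤ ∑ _i : Fin d, 1 / σ2 :=
          Finset.sum_le_sum fun i _ => (hdiag i).1
      _ = (d : ℝ) / σ2 := by simp [div_eq_mul_inv]
  have hfsqYB : fsq (Ystar * B⁻¹) = B⁻¹.trace := by
    have key : (Ystar * B⁻¹)ᵀ * (Ystar * B⁻¹) = B⁻¹ * (B * B⁻¹) := by
      rw [Matrix.transpose_mul, hBisym, Matrix.mul_assoc, ← Matrix.mul_assoc Ystarᵀ Ystar B⁻¹,
        ← hBdef]
    rw [fsq_eq_trace, key, hBB, Matrix.mul_one]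
  -- the matrix T and residual E
  set T : Matrix (Fin d) (Fin d) ℝ := B⁻¹ * (Ystarᵀ * Y) with hTdef
  set E : Matrix (Fin n) (Fin d) ℝ := Y - Ystar * T with hEdef
  have hYdec : Y = Ystar * T + E := by rw [hEdef]; abel
  clear_value T E
  have hE0 : Ystarᵀ * E = 0 := by
    rw [hEdef, Matrix.mul_sub, ← Matrix.mul_assoc Ystarᵀ Ystar T, ← hBdef, hTdef,
      ← Matrix.mul_assoc B B⁻¹ _, hBB, Matrix.one_mul, sub_self]
  have hTt : Tᵀ = Yᵀ * (Ystar * B⁻¹) := by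
    rw [hTdef, Matrix.transpose_mul, Matrix.transpose_mul, hBisym, Matrix.transpose_transpose,
      Matrix.mul_assoc]
  have hR : T * Tᵀ - 1 = (B⁻¹ * Ystarᵀ) * Δm * (Ystar * B⁻¹) := by
    rw [hTt, hTdef]
    have e1 : B⁻¹ * (Ystarᵀ * Y) * (Yᵀ * (Ystar * B⁻¹))
        = (B⁻¹ * Ystarᵀ) * (Y * Yᵀ) * (Ystar * B⁻¹) := by
      simp only [Matrix.mul_assoc]
    rw [e1, hYY, Matrix.mul_add, Matrix.add_mul]
    have e2 : (B⁻¹ * Ystarᵀ) * (Ystar * Ystarᵀ) * (Ystar * B⁻¹) = 1 := by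
      calc (B⁻¹ * Ystarᵀ) * (Ystar * Ystarᵀ) * (Ystar * B⁻¹)
          = B⁻¹ * ((Ystarᵀ * Ystar) * ((Ystarᵀ * Ystar) * B⁻¹)) := by
            simp only [Matrix.mul_assoc]
        _ = B⁻¹ * (B * (B * B⁻¹)) := by rw [← hBdef]
        _ = 1 := by rw [hBB, Matrix.mul_one, hBB']
    rw [e2]
    abel
  have htrn : 0 ≤ B⁻¹.trace := by rw [← hfsqYB]; exact fsq_nonneg _
  have hfYBt : fsq (B⁻¹ * Ystarᵀ) = B⁻¹.trace := by
    have : B⁻¹ * Ystarᵀ = (Ystar * B⁻¹)ᵀ := by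
      rw [Matrix.transpose_mul, hBisym]
    rw [this, fsq_transpose, hfsqYB]
  have hfR : fsq (T * Tᵀ - 1) ≤ ((d : ℝ) / σ2) ^ 2 * fsq Δm := by
    rw [hR]
    calc fsq ((B⁻¹ * Ystarᵀ) * Δm * (Ystar * B⁻¹))
        ≤ fsq ((B⁻¹ * Ystarᵀ) * Δm) * fsq (Ystar * B⁻¹) := fsq_mul_le _ _
      _ ≤ (fsq (B⁻¹ * Ystarᵀ) * fsq Δm) * fsq (Ystar * B⁻¹) :=
          mul_le_mul_of_nonneg_right (fsq_mul_le _ _) (fsq_nonneg _)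
      _ = B⁻¹.trace * B⁻¹.trace * fsq Δm := by rw [hfYBt, hfsqYB]; ring
      _ ≤ ((d : ℝ) / σ2) ^ 2 * fsq Δm := by
          have hfd : 0 ≤ fsq Δm := fsq_nonneg _
          have h2 : B⁻¹.trace * B⁻¹.trace ≤ ((d : ℝ) / σ2) ^ 2 := by nlinarith [htr, htrn]
          exact mul_le_mul_of_nonneg_right h2 hfd
  have hK4 : fsq (Tᵀ * T - 1) ≤ 1 / 4 := by
    rw [fsq_gram_comm]
    exact le_trans hfR hsmall
  have hKs : Real.sqrt (fsq (Tᵀ * T - 1)) ≤ 1 / 2 := by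
    have h14 : Real.sqrt (1 / 4 : ℝ) = 1 / 2 := by
      rw [show (1 / 4 : ℝ) = (1 / 2) ^ 2 by norm_num, Real.sqrt_sq (by norm_num)]
    calc Real.sqrt (fsq (Tᵀ * T - 1)) ≤ Real.sqrt (1 / 4) := Real.sqrt_le_sqrt hK4
      _ = 1 / 2 := h14
  have hTT : ∀ x : Fin d → ℝ, (1 / 2) * (∑ k, x k ^ 2) ≤ x ⬝ᵥ (Tᵀ * T) *ᵥ x := by
    intro x
    have hxnn : (0 : ℝ) ≤ ∑ k, x k ^ 2 := Finset.sum_nonneg fun _ _ => sq_nonneg _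
    have habs := quad_abs_le (Tᵀ * T - 1) x
    have h1 : x ⬝ᵥ (Tᵀ * T - 1) *ᵥ x = x ⬝ᵥ (Tᵀ * T) *ᵥ x - ∑ k, x k ^ 2 := by
      rw [Matrix.sub_mulVec, dotProduct_sub, Matrix.one_mulVec]
      congr 1
      simp [dotProduct, sq]
    have h2 : Real.sqrt (fsq (Tᵀ * T - 1)) * (∑ k, x k ^ 2) ≤ (1 / 2) * (∑ k, x k ^ 2) :=
      mul_le_mul_of_nonneg_right hKs hxnn
    rw [h1] at habs
    have h3 := neg_le_of_abs_le habs
    linarith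
  -- positive semidefiniteness of TᵀT and its square root
  have hPSDTT : (Tᵀ * T).PosSemidef := by
    refine Matrix.PosSemidef.of_dotProduct_mulVec_nonneg ?_ ?_
    · show (Tᵀ * T)ᴴ = Tᵀ * T
      calc (Tᵀ * T)ᴴ = (Tᵀ * T)ᵀ := by ext i j; simp [Matrix.conjTranspose_apply]
        _ = Tᵀ * T := by rw [Matrix.transpose_mul, Matrix.transpose_transpose]
    · intro x
      have hst : star x = x := by ext i; simp
      rw [hst, dot_transpose_mul_self]
      exact Finset.sum_nonneg fun _ _ => sq_nonneg _
  set S : Matrix (Fin d) (Fin d) ℝ := CFC.sqrt (Tᵀ * T) with hSdef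
  have hSS : S * S = Tᵀ * T := CFC.sqrt_mul_sqrt_self _ hPSDTT.nonneg
  have hSpsd : S.PosSemidef := (CFC.sqrt_nonneg _).posSemidef
  clear_value S
  have hSsym : Sᵀ = S := herm_transpose hSpsd.1
  have hSq : ∀ x : Fin d → ℝ, 0 ≤ x ⬝ᵥ S *ᵥ x := by
    intro x
    have := hSpsd.dotProduct_mulVec_nonneg x
    have hst : star x = x := by ext i; simp
    rwa [hst] at this
  have hSdet : S.det ≠ 0 := by
    intro h0
    obtain ⟨v, hv, hMv⟩ := (Matrix.exists_mulVec_eq_zero_iff).mpr h0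
    have h2 : v ⬝ᵥ (Tᵀ * T) *ᵥ v = 0 := by
      rw [← hSS, ← Matrix.mulVec_mulVec, hMv, Matrix.mulVec_zero, dotProduct_zero]
    have h3 := hTT v
    have h4 := sum_sq_pos_of_ne_zero hv
    rw [h2] at h3
    nlinarith
  have hSu : IsUnit S.det := isUnit_iff_ne_zero.mpr hSdet
  have hSi : S * S⁻¹ = 1 := Matrix.mul_nonsing_inv _ hSu
  have hSi' : S⁻¹ * S = 1 := Matrix.nonsing_inv_mul _ hSu
  have hSisym : (S⁻¹)ᵀ = S⁻¹ := by rw [Matrix.transpose_nonsing_inv, hSsym]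
  set Q : Matrix (Fin d) (Fin d) ℝ := T * S⁻¹ with hQdef
  clear_value Q
  have hQorth : Qᵀ * Q = 1 := by
    rw [hQdef, Matrix.transpose_mul, hSisym]
    calc S⁻¹ * Tᵀ * (T * S⁻¹) = S⁻¹ * ((Tᵀ * T) * S⁻¹) := by simp only [Matrix.mul_assoc]
      _ = S⁻¹ * ((S * S) * S⁻¹) := by rw [hSS]
      _ = S⁻¹ * (S * (S * S⁻¹)) := by simp only [Matrix.mul_assoc]
      _ = 1 := by rw [hSi, Matrix.mul_one, hSi']
  have hTQS : T = Q * S := by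
    rw [hQdef, Matrix.mul_assoc, hSi', Matrix.mul_one]
  have hfTQ : fsq (T - Q) ≤ fsq (Tᵀ * T - 1) := by
    have hTQ : T - Q = Q * (S - 1) := by
      rw [Matrix.mul_sub, Matrix.mul_one, ← hTQS]
    rw [hTQ, fsq_orth_mul Q hQorth]
    have := sqrt_contract S hSsym hSq
    rwa [hSS] at this
  -- projection P and control of E
  set P : Matrix (Fin n) (Fin n) ℝ := Ystar * (B⁻¹ * Ystarᵀ) with hPdef
  clear_value P
  have hPsym : Pᵀ = P := by
    rw [hPdef, Matrix.transpose_mul, Matrix.transpose_mul, hBisym,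
      Matrix.transpose_transpose, Matrix.mul_assoc]
  have hPY : P * Ystar = Ystar := by
    calc P * Ystar = Ystar * (B⁻¹ * (Ystarᵀ * Ystar)) := by
          rw [hPdef]; simp only [Matrix.mul_assoc]
      _ = Ystar := by rw [← hBdef, hBB', Matrix.mul_one]
  have hPidem : P * P = P := by
    calc P * P = (P * Ystar) * (B⁻¹ * Ystarᵀ) := by
          rw [hPdef]; simp only [Matrix.mul_assoc]
      _ = P := by rw [hPY, hPdef]
  have hPE : P * E = 0 := by
    calc P * E = Ystar * (B⁻¹ * (Ystarᵀ * E)) := by rw [hPdef]; simp only [Matrix.mul_assoc]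
      _ = 0 := by rw [hE0, Matrix.mul_zero, Matrix.mul_zero]
  have hPYQ : P * Y = Ystar * T := by
    have h1 : P * Y = P * (Ystar * T) + P * E := by rw [← Matrix.mul_add, ← hYdec]
    rw [hPE, add_zero, ← Matrix.mul_assoc, hPY] at h1
    exact h1
  have hYtP : Yᵀ * P = Tᵀ * Ystarᵀ := by
    have h := congrArg Matrix.transpose hPYQ
    rw [Matrix.transpose_mul, Matrix.transpose_mul, hPsym] at h
    exact h
  have hYstP : Ystarᵀ * P = Ystarᵀ := by
    have h := congrArg Matrix.transpose hPY
    rw [Matrix.transpose_mul, hPsym] at h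
    exact h
  have hEt : Eᵀ = Yᵀ - Tᵀ * Ystarᵀ := by
    rw [hEdef, Matrix.transpose_sub, Matrix.transpose_mul]
  have hPDP : P * Δm * (1 - P) = Ystar * T * Eᵀ := by
    have expand : P * Δm * (1 - P)
        = P * (Y * Yᵀ) - P * (Y * Yᵀ) * P - (P * (Ystar * Ystarᵀ) - P * (Ystar * Ystarᵀ) * P) := by
      rw [hΔdef]
      simp only [Matrix.mul_sub, Matrix.sub_mul, Matrix.mul_one, Matrix.one_mul]
      abel
    have t1 : P * (Y * Yᵀ) = Ystar * T * Yᵀ := by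
      rw [← Matrix.mul_assoc, hPYQ]
    have t2 : P * (Y * Yᵀ) * P = Ystar * T * (Tᵀ * Ystarᵀ) := by
      rw [t1, Matrix.mul_assoc (Ystar * T) Yᵀ P, hYtP]
    have t3 : P * (Ystar * Ystarᵀ) = Ystar * Ystarᵀ := by
      rw [← Matrix.mul_assoc, hPY]
    have t4 : P * (Ystar * Ystarᵀ) * P = Ystar * Ystarᵀ := by
      rw [t3, Matrix.mul_assoc, hYstP]
    rw [expand, t2, t1, t4, t3, hEt, Matrix.mul_sub]
    abel
  -- lower bound : (σ2/2) fsq E ≤ fsq (Ystar * T * Eᵀ)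
  have hEKey : fsq (Ystar * T * Eᵀ) = (Eᵀᵀ * (Tᵀ * (B * T)) * Eᵀ).trace := by
    rw [fsq_eq_trace]
    congr 1
    rw [hBdef]
    simp only [Matrix.transpose_mul, Matrix.transpose_transpose, Matrix.mul_assoc]
  have hCquad : ∀ x : Fin d → ℝ, 0 ≤ x ⬝ᵥ (Tᵀ * (B * T) - (σ2 / 2) • 1) *ᵥ x := by
    intro x
    have hxnn : (0 : ℝ) ≤ ∑ k, x k ^ 2 := Finset.sum_nonneg fun _ _ => sq_nonneg _
    have h1 : x ⬝ᵥ (Tᵀ * (B * T)) *ᵥ x = (T *ᵥ x) ⬝ᵥ (B *ᵥ (T *ᵥ x)) := by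
      rw [← Matrix.mul_assoc]
      exact dot_conj T B x
    have h2 := hBq (T *ᵥ x)
    have h3 : (∑ k, (T *ᵥ x) k ^ 2) = x ⬝ᵥ (Tᵀ * T) *ᵥ x := (dot_transpose_mul_self T x).symm
    have h4 := hTT x
    have h5 : x ⬝ᵥ ((σ2 / 2) • (1 : Matrix (Fin d) (Fin d) ℝ)) *ᵥ x
        = (σ2 / 2) * (∑ k, x k ^ 2) := by
      rw [Matrix.smul_mulVec, Matrix.one_mulVec, dotProduct_smul]
      congr 1
      simp [dotProduct, sq]
    rw [Matrix.sub_mulVec, dotProduct_sub, h5, h1]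
    have h6 : σ2 * (x ⬝ᵥ (Tᵀ * T) *ᵥ x) ≤ (T *ᵥ x) ⬝ᵥ (B *ᵥ (T *ᵥ x)) := by
      rw [← h3]; exact h2
    nlinarith
  have hElow : (σ2 / 2) * fsq E ≤ fsq (Ystar * T * Eᵀ) := by
    have hdiff : (Eᵀᵀ * (Tᵀ * (B * T)) * Eᵀ).trace - (σ2 / 2) * fsq E
        = (Eᵀᵀ * (Tᵀ * (B * T) - (σ2 / 2) • 1) * Eᵀ).trace := by
      rw [Matrix.mul_sub, Matrix.sub_mul, Matrix.trace_sub]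
      congr 1
      have e1 : Eᵀᵀ * ((σ2 / 2) • (1 : Matrix (Fin d) (Fin d) ℝ)) * Eᵀ
          = (σ2 / 2) • (Eᵀᵀ * Eᵀ) := by
        rw [Matrix.mul_smul, Matrix.mul_one, Matrix.smul_mul]
      rw [e1, Matrix.trace_smul]
      have e2 : fsq E = (Eᵀᵀ * Eᵀ).trace := by rw [← fsq_eq_trace, fsq_transpose]
      rw [e2]
      simp
    have hnn := trace_conj_nonneg _ Eᵀ hCquad
    rw [hEKey]
    linarith
  have hfPDP : fsq (P * Δm * (1 - P)) ≤ fsq Δm := by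
    have hs1 : (1 - P)ᵀ = 1 - P := by
      rw [Matrix.transpose_sub, Matrix.transpose_one, hPsym]
    have hi1 : (1 - P) * (1 - P) = 1 - P := by
      simp only [Matrix.sub_mul, Matrix.mul_sub, Matrix.one_mul, Matrix.mul_one, hPidem]
      abel
    calc fsq (P * Δm * (1 - P)) ≤ fsq (P * Δm) := fsq_mul_proj_le _ _ hs1 hi1
      _ ≤ fsq Δm := fsq_proj_mul_le _ _ hPsym hPidem
  have hfE : fsq E ≤ 2 / σ2 * fsq Δm := by
    have h1 : (σ2 / 2) * fsq E ≤ fsq Δm := by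
      rw [← hPDP] at hElow
      linarith [hfPDP]
    rw [div_mul_eq_mul_div, le_div_iff₀ hσ]
    linarith
  -- final assembly
  refine ⟨Q, hQorth, ?_⟩
  have hdecomp : Y - Ystar * Q = Ystar * (T - Q) + E := by
    rw [Matrix.mul_sub, hEdef]
    abel
  have hsum : fsq (Y - Ystar * Q) ≤ 2 * fsq (Ystar * (T - Q)) + 2 * fsq E := by
    rw [hdecomp]; exact fsq_add_le _ _
  have h1 : fsq (Ystar * (T - Q)) ≤ fsq Ystar * (((d : ℝ) / σ2) ^ 2 * fsq Δm) := by
    calc fsq (Ystar * (T - Q)) ≤ fsq Ystar * fsq (T - Q) := fsq_mul_le _ _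
      _ ≤ fsq Ystar * (((d : ℝ) / σ2) ^ 2 * fsq Δm) := by
          refine mul_le_mul_of_nonneg_left ?_ (fsq_nonneg _)
          exact le_trans hfTQ (by rw [fsq_gram_comm]; exact hfR)
  have hfsY : 0 ≤ fsq Ystar := fsq_nonneg _
  have hfd : 0 ≤ fsq Δm := fsq_nonneg _
  calc fsq (Y - Ystar * Q) ≤ 2 * fsq (Ystar * (T - Q)) + 2 * fsq E := hsum
    _ ≤ 2 * (fsq Ystar * (((d : ℝ) / σ2) ^ 2 * fsq Δm)) + 2 * (2 / σ2 * fsq Δm) := by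
        have := hfE
        nlinarith [h1]
    _ = (2 * fsq Ystar * ((d : ℝ) / σ2) ^ 2 + 4 / σ2) * fsq Δm := by ring



section Bridge
open Matrix

lemma frobNorm_eq_sqrt_fsq {m k : Type*} [Fintype m] [Fintype k] (A : Matrix m k ℝ) :
    frobNorm A = Real.sqrt (fsq A) := rfl

lemma fsq_neg {m k : Type*} [Fintype m] [Fintype k] (A : Matrix m k ℝ) :
    fsq (-A) = fsq A := by
  simp [fsq, Matrix.neg_apply]

lemma fsq_sub_le {m k : Type*} [Fintype m] [Fintype k] (A B : Matrix m k ℝ) :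
    fsq (A - B) ≤ 2 * fsq A + 2 * fsq B := by
  have h := fsq_add_le A (-B)
  rw [fsq_neg] at h
  simpa [sub_eq_add_neg] using h

lemma centerMat_apply (n : ℕ) (i j : Fin n) :
    centerMat n i j = (if i = j then (1:ℝ) else 0) - (n : ℝ)⁻¹ := by
  simp [centerMat, Matrix.one_apply, Matrix.sub_apply]

lemma centerMat_transpose (n : ℕ) : (centerMat n)ᵀ = centerMat n := by
  ext i j
  simp only [Matrix.transpose_apply, centerMat_apply]
  by_cases h : i = j
  · subst h; rfl
  · simp [h, Ne.symm h]

lemma centerMat_colsum {n : ℕ} (hn : 0 < n) (j : Fin n) : ∑ l, centerMat n l j = 0 := by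
  have hne : ((n : ℝ)) ≠ 0 := Nat.cast_ne_zero.mpr hn.ne'
  simp only [centerMat_apply, Finset.sum_sub_distrib]
  rw [Finset.sum_ite_eq' Finset.univ j (fun _ => (1:ℝ))]
  simp [Finset.card_univ, hne]

lemma centerMat_rowsum {n : ℕ} (hn : 0 < n) (i : Fin n) : ∑ l, centerMat n i l = 0 := by
  have hne : ((n : ℝ)) ≠ 0 := Nat.cast_ne_zero.mpr hn.ne'
  simp only [centerMat_apply, Finset.sum_sub_distrib]
  rw [Finset.sum_ite_eq Finset.univ i (fun _ => (1:ℝ))]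
  simp [Finset.card_univ, hne]

lemma centerMat_idem {n : ℕ} (hn : 0 < n) : centerMat n * centerMat n = centerMat n := by
  ext i j
  rw [Matrix.mul_apply]
  have key : ∀ l, centerMat n i l * centerMat n l j
      = (if i = l then centerMat n l j else 0) - (n : ℝ)⁻¹ * centerMat n l j := by
    intro l
    rw [centerMat_apply n i l]
    by_cases h : i = l <;> simp [h, sub_mul]
  rw [Finset.sum_congr rfl fun l _ => key l, Finset.sum_sub_distrib,
    Finset.sum_ite_eq Finset.univ i (fun l => centerMat n l j), ← Finset.mul_sum,
    centerMat_colsum hn, mul_zero, sub_zero]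
  simp

lemma center_mul_apply {n d : ℕ} (X : Fin n → Fin d → ℝ) (i : Fin n) (k : Fin d) :
    (centerMat n * toMat X) i k = X i k - (n : ℝ)⁻¹ * ∑ l, X l k := by
  rw [Matrix.mul_apply]
  have key : ∀ l, centerMat n i l * toMat X l k
      = (if i = l then X l k else 0) - (n : ℝ)⁻¹ * X l k := by
    intro l
    rw [centerMat_apply n i l]
    by_cases h : i = l <;> simp [h, sub_mul, toMat]
  rw [Finset.sum_congr rfl fun l _ => key l, Finset.sum_sub_distrib,
    Finset.sum_ite_eq Finset.univ i (fun l => X l k), ← Finset.mul_sum]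
  simp

lemma fsq_center_le {n d : ℕ} (hn : 0 < n) {X : Fin n → Fin d → ℝ} (hX : X ∈ cube n d) :
    fsq (centerMat n * toMat X) ≤ (n : ℝ) * d := by
  have hb : ∀ (i : Fin n) (k : Fin d), ((centerMat n * toMat X) i k) ^ 2 ≤ 1 := by
    intro i k
    rw [center_mul_apply]
    have h1 := hX i k
    rw [Set.mem_Icc] at h1
    have hnn : (0 : ℝ) < n := by exact_mod_cast hn
    have hs1 : (0:ℝ) ≤ ∑ l, X l k :=
      Finset.sum_nonneg fun l _ => ((hX l k).1 : (0:ℝ) ≤ X l k)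
    have hs2 : (∑ l, X l k) ≤ (n : ℝ) := by
      calc (∑ l, X l k) ≤ ∑ _l : Fin n, (1:ℝ) :=
            Finset.sum_le_sum fun l _ => ((hX l k).2 : X l k ≤ 1)
        _ = (n : ℝ) := by simp
    have hm1 : (0:ℝ) ≤ (n : ℝ)⁻¹ * ∑ l, X l k := by positivity
    have hm2 : (n : ℝ)⁻¹ * ∑ l, X l k ≤ 1 := by
      rw [inv_mul_le_iff₀ hnn, mul_one]
      exact hs2
    nlinarith [h1.1, h1.2]
  calc fsq (centerMat n * toMat X) ≤ ∑ _i : Fin n, ∑ _k : Fin d, (1:ℝ) :=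
        Finset.sum_le_sum fun i _ => Finset.sum_le_sum fun k _ => hb i k
    _ = (n : ℝ) * d := by simp [mul_comm]

lemma rdist_sq {n d : ℕ} (X : Fin n → Fin d → ℝ) (i j : Fin n) :
    rdist X i j ^ 2 = ∑ k, (X i k - X j k) ^ 2 := by
  rw [rdist, eDist, Real.sq_sqrt]
  positivity

lemma rdist_nonneg {n d : ℕ} (X : Fin n → Fin d → ℝ) (i j : Fin n) : 0 ≤ rdist X i j :=
  Real.sqrt_nonneg _

lemma rdist_symm {n d : ℕ} (X : Fin n → Fin d → ℝ) (i j : Fin n) :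
    rdist X i j = rdist X j i := by
  rw [rdist, rdist, eDist, eDist]
  congr 1
  exact Finset.sum_congr rfl fun k _ => by ring

lemma rdist_self {n d : ℕ} (X : Fin n → Fin d → ℝ) (i : Fin n) : rdist X i i = 0 := by
  simp [rdist, eDist]

lemma rdist_sq_le {n d : ℕ} {X : Fin n → Fin d → ℝ} (hX : X ∈ cube n d) (i j : Fin n) :
    rdist X i j ^ 2 ≤ (d : ℝ) := by
  rw [rdist_sq]
  calc (∑ k, (X i k - X j k) ^ 2) ≤ ∑ _k : Fin d, (1:ℝ) := by
        refine Finset.sum_le_sum fun k _ => ?_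
        have h1 := hX i k; have h2 := hX j k
        rw [Set.mem_Icc] at h1 h2
        nlinarith [h1.1, h1.2, h2.1, h2.2]
    _ = (d : ℝ) := by simp

lemma gram_id {n d : ℕ} (hn : 0 < n) (X : Fin n → Fin d → ℝ) :
    (centerMat n * toMat X) * (centerMat n * toMat X)ᵀ
      = (-(1/2 : ℝ)) • (centerMat n * sqDistMat X * centerMat n) := by
  have hD : sqDistMat X = Matrix.of (fun i (_ : Fin n) => ∑ k, X i k ^ 2)
      + Matrix.of (fun (_ : Fin n) j => ∑ k, X j k ^ 2)
      - (2 : ℝ) • (toMat X * (toMat X)ᵀ) := by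
    ext i j
    simp only [sqDistMat, Matrix.of_apply, Matrix.sub_apply, Matrix.add_apply,
      Matrix.smul_apply, Matrix.mul_apply, Matrix.transpose_apply, smul_eq_mul]
    rw [rdist_sq]
    have key : ∀ k, (X i k - X j k) ^ 2
        = X i k ^ 2 + X j k ^ 2 - 2 * (X i k * X j k) := fun k => by ring
    rw [Finset.sum_congr rfl fun k _ => key k, Finset.sum_sub_distrib,
      Finset.sum_add_distrib, Finset.mul_sum]
    simp [toMat]
  have hcol : (Matrix.of (fun i (_ : Fin n) => ∑ k, X i k ^ 2)) * centerMat n = 0 := by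
    ext i j
    rw [Matrix.mul_apply]
    simp only [Matrix.of_apply]
    rw [← Finset.mul_sum, centerMat_colsum hn, mul_zero]
    simp
  have hrow : centerMat n * (Matrix.of (fun (_ : Fin n) j => ∑ k, X j k ^ 2)) = 0 := by
    ext i j
    rw [Matrix.mul_apply]
    simp only [Matrix.of_apply]
    rw [← Finset.sum_mul, centerMat_rowsum hn, zero_mul]
    simp
  have hG : (centerMat n * toMat X) * (centerMat n * toMat X)ᵀ
      = centerMat n * (toMat X * (toMat X)ᵀ) * centerMat n := by
    rw [Matrix.transpose_mul, centerMat_transpose]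
    simp only [Matrix.mul_assoc]
  have hmain : centerMat n * sqDistMat X * centerMat n
      = (-2 : ℝ) • (centerMat n * (toMat X * (toMat X)ᵀ) * centerMat n) := by
    rw [hD]
    simp only [Matrix.mul_add, Matrix.add_mul, Matrix.mul_sub, Matrix.sub_mul,
      Matrix.mul_smul, Matrix.smul_mul]
    rw [Matrix.mul_assoc (centerMat n) _ (centerMat n), hcol, Matrix.mul_zero,
      hrow, Matrix.zero_mul]
    ext i j
    simp [Matrix.mul_assoc]
  rw [hG, hmain, smul_smul]
  norm_num

lemma two_pairSum {n : ℕ} (g : Fin n → Fin n → ℝ) (hsym : ∀ i j, g i j = g j i)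
    (hdiag : ∀ i, g i i = 0) : ∑ i, ∑ j, g i j = 2 * pairSum g := by
  have key : ∀ i j, g i j = (if i < j then g i j else 0) + (if j < i then g i j else 0) := by
    intro i j
    rcases lt_trichotomy i j with h | h | h
    · simp [h, asymm h]
    · subst h; simp [lt_irrefl, hdiag]
    · simp [h, asymm h, not_lt_of_gt h]
  have h2 : (∑ i, ∑ j, if j < i then g i j else 0) = pairSum g := by
    rw [Finset.sum_comm, pairSum]
    refine Finset.sum_congr rfl fun j _ => Finset.sum_congr rfl fun i _ => ?_
    by_cases h : j < i <;> simp [h, hsym]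
  calc ∑ i, ∑ j, g i j
      = ∑ i, ∑ j, ((if i < j then g i j else 0) + (if j < i then g i j else 0)) :=
        Finset.sum_congr rfl fun i _ => Finset.sum_congr rfl fun j _ => key i j
    _ = (∑ i, ∑ j, if i < j then g i j else 0) + ∑ i, ∑ j, if j < i then g i j else 0 := by
        simp [Finset.sum_add_distrib]
    _ = pairSum g + pairSum g := by rw [h2, pairSum]
    _ = 2 * pairSum g := by ring

lemma pairSum_nonneg {n : ℕ} {f : Fin n → Fin n → ℝ} (hf : ∀ i j, 0 ≤ f i j) :
    0 ≤ pairSum f := by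
  refine Finset.sum_nonneg fun i _ => Finset.sum_nonneg fun j _ => ?_
  by_cases h : i < j <;> simp [h, hf]

lemma smin_quad {n d : ℕ} (A : Matrix (Fin n) (Fin d) ℝ) {a : ℝ} (ha : 0 ≤ a)
    (h : a ≤ sMin A) (v : Fin d → ℝ) :
    a ^ 2 * ∑ k, v k ^ 2 ≤ ∑ i, (A *ᵥ v) i ^ 2 := by
  by_cases hv : v = 0
  · subst hv
    simp [Matrix.mulVec_zero]
  · have hs : 0 < ∑ k, v k ^ 2 := sum_sq_pos_of_ne_zero hv
    set c := Real.sqrt (∑ k, v k ^ 2) with hc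
    have hc0 : 0 < c := Real.sqrt_pos.mpr hs
    have hc2 : c ^ 2 = ∑ k, v k ^ 2 := Real.sq_sqrt hs.le
    have hmem : Real.sqrt (∑ i, (A.mulVec (c⁻¹ • v)) i ^ 2) ∈
        {t | ∃ u : Fin d → ℝ, ∑ k, u k ^ 2 = 1 ∧
          t = Real.sqrt (∑ i, (A.mulVec u) i ^ 2)} := by
      refine ⟨c⁻¹ • v, ?_, rfl⟩
      have : ∀ k, ((c⁻¹ • v) k) ^ 2 = c⁻¹ ^ 2 * v k ^ 2 := fun k => by
        simp [Pi.smul_apply, smul_eq_mul, mul_pow]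
      rw [Finset.sum_congr rfl fun k _ => this k, ← Finset.mul_sum, ← hc2]
      field_simp
    have hbdd : BddBelow {t | ∃ u : Fin d → ℝ, ∑ k, u k ^ 2 = 1 ∧
        t = Real.sqrt (∑ i, (A.mulVec u) i ^ 2)} := by
      refine ⟨0, fun t ht => ?_⟩
      obtain ⟨u, _, htu⟩ := ht
      rw [htu]
      exact Real.sqrt_nonneg _
    have hle : sMin A ≤ Real.sqrt (∑ i, (A.mulVec (c⁻¹ • v)) i ^ 2) := csInf_le hbdd hmem
    have h1 : a ≤ Real.sqrt (∑ i, (A.mulVec (c⁻¹ • v)) i ^ 2) := le_trans h hle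
    have h2 : a ^ 2 ≤ ∑ i, (A.mulVec (c⁻¹ • v)) i ^ 2 := by
      have := pow_le_pow_left₀ ha h1 2
      rwa [Real.sq_sqrt (Finset.sum_nonneg fun _ _ => sq_nonneg _)] at this
    have h3 : ∑ i, (A.mulVec (c⁻¹ • v)) i ^ 2 = c⁻¹ ^ 2 * ∑ i, (A.mulVec v) i ^ 2 := by
      rw [Matrix.mulVec_smul, Finset.mul_sum]
      refine Finset.sum_congr rfl fun i _ => ?_
      simp [Pi.smul_apply, smul_eq_mul, mul_pow]
    rw [h3] at h2
    have h4 : a ^ 2 * (∑ k, v k ^ 2)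
        ≤ (c⁻¹ ^ 2 * ∑ i, (A.mulVec v) i ^ 2) * (∑ k, v k ^ 2) :=
      mul_le_mul_of_nonneg_right h2 hs.le
    have h5 : (c⁻¹ ^ 2 * ∑ i, (A.mulVec v) i ^ 2) * (∑ k, v k ^ 2)
        = ∑ i, (A.mulVec v) i ^ 2 := by
      rw [← hc2]
      field_simp
    rw [h5] at h4
    exact h4

lemma orbit_nonneg {n d : ℕ} (X Xstar : Fin n → Fin d → ℝ) : 0 ≤ orbitDist X Xstar := by
  refine le_csInf ⟨_, ⟨1, one_mem _, rfl⟩⟩ fun t ht => ?_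
  obtain ⟨Q, _, htq⟩ := ht
  rw [htq, frobNorm_eq_sqrt_fsq]
  positivity

lemma orbit_le {n d : ℕ} (X Xstar : Fin n → Fin d → ℝ) (Q : Matrix (Fin d) (Fin d) ℝ)
    (hQ : Q ∈ Matrix.orthogonalGroup (Fin d) ℝ) :
    orbitDist X Xstar ≤ (Real.sqrt n)⁻¹ *
      frobNorm (centerMat n * toMat X - centerMat n * toMat Xstar * Q) := by
  refine csInf_le ⟨0, fun t ht => ?_⟩ ⟨Q, hQ, rfl⟩
  obtain ⟨Q', _, htq⟩ := ht
  rw [htq, frobNorm_eq_sqrt_fsq]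
  positivity

lemma orbit_sq_le {n d : ℕ} (X Xstar : Fin n → Fin d → ℝ) (Q : Matrix (Fin d) (Fin d) ℝ)
    (hQ : Q ∈ Matrix.orthogonalGroup (Fin d) ℝ) :
    orbitDist X Xstar ^ 2 ≤ (n : ℝ)⁻¹ *
      fsq (centerMat n * toMat X - centerMat n * toMat Xstar * Q) := by
  have h1 := orbit_le X Xstar Q hQ
  have h2 := orbit_nonneg X Xstar
  have h3 := pow_le_pow_left₀ h2 h1 2
  calc orbitDist X Xstar ^ 2
      ≤ ((Real.sqrt n)⁻¹ *
        frobNorm (centerMat n * toMat X - centerMat n * toMat Xstar * Q)) ^ 2 := h3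
    _ = (n : ℝ)⁻¹ * fsq (centerMat n * toMat X - centerMat n * toMat Xstar * Q) := by
        rw [mul_pow, frobNorm_eq_sqrt_fsq, Real.sq_sqrt (fsq_nonneg _), inv_pow,
          Real.sq_sqrt (Nat.cast_nonneg n)]

lemma orthmem {d : ℕ} (Q : Matrix (Fin d) (Fin d) ℝ) (hQ : Qᵀ * Q = 1) :
    Q ∈ Matrix.orthogonalGroup (Fin d) ℝ := by
  rw [Matrix.mem_orthogonalGroup_iff']
  have hstar : star Q = Qᵀ := by
    ext i j
    simp [Matrix.star_apply]
  exact hQ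

end Bridge

end LemA7


open LemA7 Matrix

/-- Lemma A.7: from distance discrepancy to orbit distance, under
well-conditioning of the true centered configuration. -/
theorem orbit_dist_le_of_well_conditioned
    (d : ℕ) (hd : 1 ≤ d) (α : ℝ) (hα : 0 < α) :
    ∃ c₂ : ℝ, 0 < c₂ ∧
      ∀ (n : ℕ) (X Xstar : Fin n → Fin d → ℝ),
        X ∈ cube n d → Xstar ∈ cube n d →
        α * Real.sqrt n ≤ sMin (centerMat n * toMat Xstar) →
        orbitDist X Xstar ^ 2 ≤ c₂ * distDiscrep X Xstar := by
  have hd0 : (0:ℝ) < d := by exact_mod_cast hd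
  have hc2 : (0:ℝ) < 2*(d:ℝ)^4/α^4 + 4*d/α^2 + 16*(d:ℝ)^4/α^4 := by positivity
  refine ⟨2*(d:ℝ)^4/α^4 + 4*d/α^2 + 16*(d:ℝ)^4/α^4, hc2, ?_⟩
  intro n X Xstar hX hXs hsmin
  have hΔ0 : 0 ≤ distDiscrep X Xstar := by
    rw [distDiscrep]
    have h1 : 0 ≤ pairSum fun i j => (rdist X i j - rdist Xstar i j) ^ 2 :=
      pairSum_nonneg fun i j => sq_nonneg _
    have h2 : 0 ≤ (numPairs n)⁻¹ := by
      rw [numPairs]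
      rcases Nat.eq_zero_or_pos n with h | h
      · subst h; norm_num
      · have h3 : (1:ℝ) ≤ n := by exact_mod_cast h
        apply inv_nonneg.mpr
        nlinarith
    exact mul_nonneg h2 h1
  by_cases hn1 : n ≤ 1
  · -- degenerate cases n = 0, 1 : the orbit distance vanishes
    have hO : orbitDist X Xstar = 0 := by
      have h2 := orbit_nonneg X Xstar
      have h1 := orbit_le X Xstar 1 (one_mem _)
      interval_cases n
      · norm_num [Real.sqrt_zero] at h1
        linarith
      · have hcm : centerMat 1 = 0 := by
          ext i j
          rw [centerMat_apply]
          have hij : i = j := Subsingleton.elim i j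
          simp [hij]
        rw [hcm] at h1
        simp [frobNorm] at h1
        linarith
    rw [hO]
    calc (0:ℝ) ^ 2 = 0 := by norm_num
      _ ≤ _ := mul_nonneg hc2.le hΔ0
  · push_neg at hn1
    have hn2 : 2 ≤ n := hn1
    have hnat : 0 < n := by omega
    have hnn : (0:ℝ) < n := by exact_mod_cast hnat
    have hn2' : (2:ℝ) ≤ n := by exact_mod_cast hn2
    have hndne : (n:ℝ) ≠ 0 := ne_of_gt hnn
    have hαne : α ≠ 0 := ne_of_gt hα
    set J := centerMat n with hJ
    set Y := J * toMat X with hYdef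
    set Ys := J * toMat Xstar with hYsdef
    set σ2 := α ^ 2 * n with hσ2
    have hσ : 0 < σ2 := by rw [hσ2]; exact mul_pos (by positivity) hnn
    have hBq : ∀ v : Fin d → ℝ, σ2 * (∑ k, v k ^ 2) ≤ v ⬝ᵥ (Ysᵀ * Ys) *ᵥ v := by
      intro v
      have h1 := smin_quad Ys (a := α * Real.sqrt n) (by positivity) hsmin v
      rw [dot_transpose_mul_self]
      calc σ2 * ∑ k, v k ^ 2 = (α * Real.sqrt n) ^ 2 * ∑ k, v k ^ 2 := by
            rw [mul_pow, Real.sq_sqrt (Nat.cast_nonneg n), hσ2]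
        _ ≤ _ := h1
    set Δm := Y * Yᵀ - Ys * Ysᵀ with hΔm
    set Δ := distDiscrep X Xstar with hΔ
    have hgram : Δm = (-(1/2:ℝ)) • (J * (sqDistMat X - sqDistMat Xstar) * J) := by
      rw [hΔm, hYdef, hYsdef, hJ, gram_id hnat X, gram_id hnat Xstar, ← smul_sub]
      congr 1
      rw [Matrix.mul_sub, Matrix.sub_mul]
    have hJsym : Jᵀ = J := centerMat_transpose n
    have hJidem : J * J = J := centerMat_idem hnat
    have hfD : fsq (sqDistMat X - sqDistMat Xstar)
        ≤ 4*(d:ℝ) * (2 * pairSum (fun i j => (rdist X i j - rdist Xstar i j) ^ 2)) := by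
      have hent : ∀ i j, ((sqDistMat X - sqDistMat Xstar) i j) ^ 2
          ≤ 4*(d:ℝ)*(rdist X i j - rdist Xstar i j) ^ 2 := by
        intro i j
        have he : (sqDistMat X - sqDistMat Xstar) i j
            = rdist X i j ^ 2 - rdist Xstar i j ^ 2 := rfl
        rw [he]
        have hr := rdist_nonneg X i j
        have hs := rdist_nonneg Xstar i j
        have hr2 := rdist_sq_le hX i j
        have hs2 := rdist_sq_le hXs i j
        have h4 : (rdist X i j + rdist Xstar i j) ^ 2 ≤ 4*(d:ℝ) := by nlinarith
        calc (rdist X i j ^ 2 - rdist Xstar i j ^ 2) ^ 2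
            = (rdist X i j - rdist Xstar i j) ^ 2 * (rdist X i j + rdist Xstar i j) ^ 2 := by
              ring
          _ ≤ (rdist X i j - rdist Xstar i j) ^ 2 * (4*(d:ℝ)) :=
              mul_le_mul_of_nonneg_left h4 (sq_nonneg _)
          _ = 4*(d:ℝ)*(rdist X i j - rdist Xstar i j) ^ 2 := by ring
      have h2p := two_pairSum (fun i j => (rdist X i j - rdist Xstar i j) ^ 2)
        (fun i j => by
          show (rdist X i j - rdist Xstar i j) ^ 2 = (rdist X j i - rdist Xstar j i) ^ 2
          rw [rdist_symm X i j, rdist_symm Xstar i j])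
        (fun i => by
          show (rdist X i i - rdist Xstar i i) ^ 2 = 0
          rw [rdist_self, rdist_self]; ring)
      calc fsq (sqDistMat X - sqDistMat Xstar)
          ≤ ∑ i, ∑ j, 4*(d:ℝ)*(rdist X i j - rdist Xstar i j) ^ 2 :=
            Finset.sum_le_sum fun i _ => Finset.sum_le_sum fun j _ => hent i j
        _ = 4*(d:ℝ) * ∑ i, ∑ j, (rdist X i j - rdist Xstar i j) ^ 2 := by
            rw [Finset.mul_sum]
            exact Finset.sum_congr rfl fun i _ => by rw [Finset.mul_sum]
        _ = 4*(d:ℝ) * (2 * pairSum (fun i j => (rdist X i j - rdist Xstar i j) ^ 2)) := by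
            rw [h2p]
    have hNpos : (0:ℝ) < numPairs n := by rw [numPairs]; nlinarith
    have hNps : pairSum (fun i j => (rdist X i j - rdist Xstar i j) ^ 2) = numPairs n * Δ := by
      rw [hΔ, distDiscrep]
      field_simp
    have hNle : numPairs n ≤ (n:ℝ) ^ 2 / 2 := by rw [numPairs]; nlinarith
    have hΔ0' : 0 ≤ Δ := hΔ0
    have hΔm_le : fsq Δm ≤ (d:ℝ) * (n:ℝ) ^ 2 * Δ := by
      have h1 : fsq Δm = (1/4:ℝ) * fsq (J * (sqDistMat X - sqDistMat Xstar) * J) := by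
        rw [hgram, fsq_smul]; norm_num
      have h2 : fsq (J * (sqDistMat X - sqDistMat Xstar) * J)
          ≤ fsq (sqDistMat X - sqDistMat Xstar) :=
        le_trans (fsq_mul_proj_le _ _ hJsym hJidem) (fsq_proj_mul_le _ _ hJsym hJidem)
      have h3 : fsq Δm ≤ 2*(d:ℝ) * (numPairs n * Δ) := by
        rw [hNps] at hfD
        linarith
      have h4 : 2*(d:ℝ) * (numPairs n * Δ) ≤ 2*(d:ℝ) * ((n:ℝ) ^ 2 / 2 * Δ) := by
        have h5 : numPairs n * Δ ≤ (n:ℝ) ^ 2 / 2 * Δ := mul_le_mul_of_nonneg_right hNle hΔ0'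
        have h6 : (0:ℝ) ≤ 2*(d:ℝ) := by positivity
        exact mul_le_mul_of_nonneg_left h5 h6
      have h7 : 2*(d:ℝ) * ((n:ℝ) ^ 2 / 2 * Δ) = (d:ℝ) * (n:ℝ) ^ 2 * Δ := by ring
      linarith
    by_cases hcase : ((d:ℝ)/σ2) ^ 2 * fsq Δm ≤ 1/4
    · -- small-discrepancy case : use the Procrustes core lemma
      rw [hΔm] at hcase
      obtain ⟨Q, hQorth, hQb⟩ := core Y Ys σ2 hσ hBq hcase
      rw [← hΔm] at hQb
      have hsq := orbit_sq_le X Xstar Q (orthmem Q hQorth)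
      have hfold : centerMat n * toMat X - centerMat n * toMat Xstar * Q = Y - Ys * Q := by
        rw [hYdef, hYsdef, hJ]
      rw [hfold] at hsq
      have hYs_le : fsq Ys ≤ (n:ℝ)*d := by rw [hYsdef, hJ]; exact fsq_center_le hnat hXs
      have hfΔnn : 0 ≤ fsq Δm := fsq_nonneg _
      have h4σ : (0:ℝ) ≤ 4/σ2 := div_nonneg (by norm_num) hσ.le
      have hmono : fsq (Y - Ys * Q)
          ≤ (2*((n:ℝ)*d)*((d:ℝ)/σ2) ^ 2 + 4/σ2) * ((d:ℝ)*(n:ℝ) ^ 2*Δ) := by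
        have hsqnn : (0:ℝ) ≤ ((d:ℝ)/σ2) ^ 2 := sq_nonneg _
        have hcoef1 : (2*fsq Ys*((d:ℝ)/σ2) ^ 2 + 4/σ2)
            ≤ (2*((n:ℝ)*d)*((d:ℝ)/σ2) ^ 2 + 4/σ2) := by nlinarith [hYs_le, fsq_nonneg Ys]
        have hcoefnn : 0 ≤ 2*fsq Ys*((d:ℝ)/σ2) ^ 2 + 4/σ2 := by
          have := fsq_nonneg Ys
          nlinarith
        have hcoefnn2 : 0 ≤ 2*((n:ℝ)*d)*((d:ℝ)/σ2) ^ 2 + 4/σ2 := by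
          have : (0:ℝ) ≤ (n:ℝ)*d := by positivity
          nlinarith
        calc fsq (Y - Ys * Q) ≤ (2*fsq Ys*((d:ℝ)/σ2) ^ 2 + 4/σ2) * fsq Δm := hQb
          _ ≤ (2*((n:ℝ)*d)*((d:ℝ)/σ2) ^ 2 + 4/σ2) * ((d:ℝ)*(n:ℝ) ^ 2*Δ) :=
              mul_le_mul hcoef1 hΔm_le hfΔnn hcoefnn2
      have heq : (n:ℝ)⁻¹ * ((2*((n:ℝ)*d)*((d:ℝ)/σ2) ^ 2 + 4/σ2) * ((d:ℝ)*(n:ℝ) ^ 2*Δ))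
          = (2*(d:ℝ)^4/α^4 + 4*(d:ℝ)/α^2) * Δ := by
        rw [hσ2]
        field_simp
      calc orbitDist X Xstar ^ 2 ≤ (n:ℝ)⁻¹ * fsq (Y - Ys * Q) := hsq
        _ ≤ (n:ℝ)⁻¹ * ((2*((n:ℝ)*d)*((d:ℝ)/σ2) ^ 2 + 4/σ2) * ((d:ℝ)*(n:ℝ) ^ 2*Δ)) :=
            mul_le_mul_of_nonneg_left hmono (by positivity)
        _ = (2*(d:ℝ)^4/α^4 + 4*(d:ℝ)/α^2) * Δ := heq
        _ ≤ (2*(d:ℝ)^4/α^4 + 4*(d:ℝ)/α^2 + 16*(d:ℝ)^4/α^4) * Δ := by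
            have hrest : (0:ℝ) ≤ 16*(d:ℝ)^4/α^4 * Δ := by positivity
            nlinarith
    · -- large-discrepancy case : the trivial bound suffices
      push_neg at hcase
      have hsq := orbit_sq_le X Xstar 1 (one_mem _)
      have hfold : centerMat n * toMat X
          - centerMat n * toMat Xstar * (1 : Matrix (Fin d) (Fin d) ℝ) = Y - Ys := by
        rw [hYdef, hYsdef, hJ, Matrix.mul_one]
      rw [hfold] at hsq
      have hY_le : fsq Y ≤ (n:ℝ)*d := by rw [hYdef, hJ]; exact fsq_center_le hnat hX
      have hYs_le : fsq Ys ≤ (n:ℝ)*d := by rw [hYsdef, hJ]; exact fsq_center_le hnat hXs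
      have h4d : orbitDist X Xstar ^ 2 ≤ 4*(d:ℝ) := by
        have h1 : fsq (Y - Ys) ≤ 2*fsq Y + 2*fsq Ys := fsq_sub_le _ _
        have h2 : fsq (Y - Ys) ≤ 4*((n:ℝ)*d) := by linarith
        calc orbitDist X Xstar ^ 2 ≤ (n:ℝ)⁻¹ * fsq (Y - Ys) := hsq
          _ ≤ (n:ℝ)⁻¹ * (4*((n:ℝ)*d)) := mul_le_mul_of_nonneg_left h2 (by positivity)
          _ = 4*(d:ℝ) := by field_simp
      have hΔbig : α^4/(4*(d:ℝ)^3) < Δ := by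
        have h2 : ((d:ℝ)/σ2) ^ 2 * fsq Δm ≤ ((d:ℝ)/σ2) ^ 2 * ((d:ℝ)*(n:ℝ) ^ 2*Δ) :=
          mul_le_mul_of_nonneg_left hΔm_le (sq_nonneg _)
        have h3 : ((d:ℝ)/σ2) ^ 2 * ((d:ℝ)*(n:ℝ) ^ 2*Δ) = (d:ℝ)^3*Δ/α^4 := by
          rw [hσ2]
          field_simp
        have h4 : (1:ℝ)/4 < (d:ℝ)^3*Δ/α^4 := by
          rw [← h3]
          exact lt_of_lt_of_le hcase h2
        rw [lt_div_iff₀ (by positivity : (0:ℝ) < α^4)] at h4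
        rw [div_lt_iff₀ (by positivity : (0:ℝ) < 4*(d:ℝ)^3)]
        nlinarith
      have hc3 : 4*(d:ℝ) ≤ 16*(d:ℝ)^4/α^4 * Δ := by
        have h5 : 16*(d:ℝ)^4/α^4 * (α^4/(4*(d:ℝ)^3)) = 4*(d:ℝ) := by
          field_simp
          ring
        calc 4*(d:ℝ) = 16*(d:ℝ)^4/α^4 * (α^4/(4*(d:ℝ)^3)) := h5.symm
          _ ≤ 16*(d:ℝ)^4/α^4 * Δ :=
              mul_le_mul_of_nonneg_left hΔbig.le (by positivity)
      have hrest : (0:ℝ) ≤ (2*(d:ℝ)^4/α^4 + 4*(d:ℝ)/α^2) * Δ := by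
        apply mul_nonneg (by positivity) hΔ0
      calc orbitDist X Xstar ^ 2 ≤ 4*(d:ℝ) := h4d
        _ ≤ 16*(d:ℝ)^4/α^4 * Δ := hc3
        _ ≤ (2*(d:ℝ)^4/α^4 + 4*(d:ℝ)/α^2 + 16*(d:ℝ)^4/α^4) * Δ := by nlinarith
end
end

section
/- Well-conditioning of uniform random configurations (Lemma A.8). Fix d ≥ 1. Let x₁⋆,…,xₙ⋆ be i.i.d. Uniform([0,1]^d), let X⋆ be the n×d matrix with rows (x_i⋆)ᵀ, and let X_c⋆ = JX⋆ with J = I − n⁻¹11ᵀ. Then there exists a constant c₁ = c₁(d) > 0 such that P(s_min(X_c⋆) ≥ c₁√n) → 1 as n → ∞, where s_min denotes the smallest singular value of the n×d matrix. -/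
open MeasureTheory ProbabilityTheory Filter

noncomputable section

-- ===== Auxiliary lemmas for Lemma A.8 =====
open scoped ENNReal
section Aux

lemma pi_prod_integral {α : Type*} [MeasurableSpace α] (μ : Measure α) [SigmaFinite μ]
    {ι : Type*} [Fintype ι] (f : ι → α → ℝ) :
    ∫ x : ι → α, ∏ i, f i (x i) ∂(Measure.pi fun _ => μ) = ∏ i, ∫ x, f i x ∂μ := by
  letI : MeasureSpace α := ⟨μ⟩
  exact MeasureTheory.integral_fintype_prod_eq_prod (μ := fun _ => μ) f

lemma pi_prod_integrable {α : Type*} [MeasurableSpace α] (μ : Measure α) [SigmaFinite μ]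
    {ι : Type*} [Fintype ι] (f : ι → α → ℝ) (hf : ∀ i, Integrable (f i) μ) :
    Integrable (fun x : ι → α => ∏ i, f i (x i)) (Measure.pi fun _ => μ) := by
  letI : MeasureSpace α := ⟨μ⟩
  exact MeasureTheory.Integrable.fintype_prod hf

variable {α : Type*} [MeasurableSpace α] (μ : Measure α) [IsProbabilityMeasure μ]
  {ι : Type*} [Fintype ι] [DecidableEq ι]

lemma coord_eq (h : α → ℝ) (k : ι) (x : ι → α) :
    h (x k) = ∏ i, (if i = k then h else fun _ => (1:ℝ)) (x i) := by
  rw [Finset.prod_eq_single k (fun b _ hb => by simp [hb]) (by simp)]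
  simp

lemma coord2_eq (h g : α → ℝ) {k l : ι} (hkl : k ≠ l) (x : ι → α) :
    h (x k) * g (x l)
      = ∏ i, (if i = k then h else if i = l then g else fun _ => (1:ℝ)) (x i) := by
  classical
  rw [← Finset.prod_mul_prod_compl ({k, l} : Finset ι)]
  rw [Finset.prod_pair hkl]
  rw [Finset.prod_eq_one (fun i hi => by
    simp only [Finset.mem_compl, Finset.mem_insert, Finset.mem_singleton, not_or] at hi
    simp [hi.1, hi.2])]
  simp [hkl, Ne.symm hkl]

lemma coord_integral (h : α → ℝ) (k : ι) :
    ∫ x : ι → α, h (x k) ∂(Measure.pi fun _ => μ) = ∫ y, h y ∂μ := by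
  simp_rw [coord_eq h k]
  rw [pi_prod_integral]
  rw [Finset.prod_eq_single k (fun b _ hb => by simp [hb]) (by simp)]
  simp

lemma coord2_integral (h g : α → ℝ) {k l : ι} (hkl : k ≠ l) :
    ∫ x : ι → α, h (x k) * g (x l) ∂(Measure.pi fun _ => μ)
      = (∫ y, h y ∂μ) * ∫ y, g y ∂μ := by
  classical
  simp_rw [coord2_eq h g hkl]
  rw [pi_prod_integral]
  rw [← Finset.prod_mul_prod_compl ({k, l} : Finset ι), Finset.prod_pair hkl]
  rw [Finset.prod_eq_one (fun i hi => by
    simp only [Finset.mem_compl, Finset.mem_insert, Finset.mem_singleton, not_or] at hi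
    simp [hi.1, hi.2])]
  simp [hkl, Ne.symm hkl]

lemma coord_integrable (h : α → ℝ) (hh : Integrable h μ) (k : ι) :
    Integrable (fun x : ι → α => h (x k)) (Measure.pi fun _ => μ) := by
  simp_rw [coord_eq h k]
  exact pi_prod_integrable μ _ (fun i => by by_cases hik : i = k <;> simp [hik, hh])

lemma coord2_integrable (h g : α → ℝ) (hh : Integrable h μ) (hg : Integrable g μ)
    {k l : ι} (hkl : k ≠ l) :
    Integrable (fun x : ι → α => h (x k) * g (x l)) (Measure.pi fun _ => μ) := by
  simp_rw [coord2_eq h g hkl]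
  exact pi_prod_integrable μ _ (fun i => by
    by_cases hik : i = k
    · simp [hik, hh]
    · by_cases hil : i = l <;> simp [hik, hil, Ne.symm hkl, hg])

end Aux

section Mu1

def mu1 : Measure ℝ := volume.restrict (Set.Icc 0 1)

instance : IsProbabilityMeasure mu1 :=
  ⟨by rw [mu1, Measure.restrict_apply_univ, Real.volume_Icc]; norm_num⟩

lemma mom_pow (p : ℕ) : ∫ x, x ^ p ∂mu1 = 1 / (p + 1) := by
  rw [mu1, MeasureTheory.integral_Icc_eq_integral_Ioc,
    ← intervalIntegral.integral_of_le (zero_le_one), integral_pow]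
  simp

lemma int_pow (p : ℕ) : Integrable (fun x : ℝ => x ^ p) mu1 :=
  (continuous_pow p).integrableOn_Icc

end Mu1

section Cheb

lemma cheb {α : Type*} [MeasurableSpace α] (μ : Measure α) [IsProbabilityMeasure μ]
    (f : α → ℝ) (hf : Integrable f μ) (hf2 : Integrable (fun x => f x * f x) μ)
    (hb : ∫ x, f x * f x ∂μ ≤ 1) (n : ℕ) {a : ℝ} (ha : 0 < a) :
    (Measure.pi fun _ : Fin n => μ) {X | a ≤ |∑ i, f (X i) - n * ∫ y, f y ∂μ|}
      ≤ ENNReal.ofReal (n / a ^ 2) := by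
  set m := ∫ y, f y ∂μ with hm
  set g : α → ℝ := fun x => f x - m with hg
  have hgint : Integrable g μ := hf.sub (integrable_const m)
  have hgg : (fun x => g x * g x) = fun x => f x * f x - (2*m) * f x + m * m := by
    funext x; simp only [hg]; ring
  have hggint : Integrable (fun x => g x * g x) μ := by
    rw [hgg]; exact (hf2.sub (hf.const_mul (2*m))).add (integrable_const _)
  have hgzero : ∫ y, g y ∂μ = 0 := by
    rw [hg, integral_sub hf (integrable_const m)]; simp [hm]
  have hggval : ∫ y, g y * g y ∂μ ≤ 1 := by
    rw [hgg]
    have h1 : Integrable (fun x : α => f x * f x - 2 * m * f x) μ :=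
      hf2.sub (hf.const_mul (2*m))
    rw [integral_add h1 (integrable_const (m*m)),
      integral_sub hf2 (hf.const_mul (2*m)), integral_const_mul, integral_const]
    simp only [measure_univ, probReal_univ, ENNReal.toReal_one, one_smul, ← hm]
    nlinarith [hb]
  set W : (Fin n → α) → ℝ := fun X => ∑ i, g (X i) with hW
  have hWsq : ∀ X : Fin n → α, W X * W X = ∑ i : Fin n, ∑ j : Fin n, g (X i) * g (X j) := by
    intro X; rw [hW, Finset.sum_mul_sum]
  have hterm : ∀ i j : Fin n, Integrable (fun X : Fin n → α => g (X i) * g (X j))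
      (Measure.pi fun _ => μ) := by
    intro i j
    by_cases hij : i = j
    · subst hij; exact coord_integrable μ (fun x => g x * g x) hggint i
    · exact coord2_integrable μ g g hgint hgint hij
  have hW2int : Integrable (fun X => W X * W X) (Measure.pi fun _ : Fin n => μ) := by
    simp_rw [hWsq]
    exact integrable_finset_sum _ (fun i _ => integrable_finset_sum _ (fun j _ => hterm i j))
  have hW2 : ∫ X, W X * W X ∂(Measure.pi fun _ : Fin n => μ) ≤ n := by
    simp_rw [hWsq]
    rw [integral_finset_sum _ (fun i _ => integrable_finset_sum _ (fun j _ => hterm i j))]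
    have : ∀ i : Fin n, ∫ X, ∑ j : Fin n, g (X i) * g (X j) ∂(Measure.pi fun _ => μ) ≤ 1 := by
      intro i
      rw [integral_finset_sum _ (fun j _ => hterm i j)]
      have : ∀ j : Fin n, ∫ X : Fin n → α, g (X i) * g (X j) ∂(Measure.pi fun _ => μ)
          = if j = i then ∫ y, g y * g y ∂μ else 0 := by
        intro j
        by_cases hij : j = i
        · subst hij; rw [if_pos rfl]; exact coord_integral μ (fun x => g x * g x) j
        · rw [if_neg hij, coord2_integral μ g g (Ne.symm hij), hgzero]; ring
      simp_rw [this]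
      rw [Finset.sum_ite_eq' Finset.univ i (fun _ => ∫ y, g y * g y ∂μ)]
      simpa using hggval
    calc ∑ i : Fin n, ∫ X, ∑ j : Fin n, g (X i) * g (X j) ∂(Measure.pi fun _ => μ)
        ≤ ∑ _i : Fin n, (1:ℝ) := Finset.sum_le_sum (fun i _ => this i)
      _ = n := by simp
  have hmarkov := mul_meas_ge_le_integral_of_nonneg
    (μ := Measure.pi fun _ : Fin n => μ) (f := fun X => W X * W X)
    (Filter.Eventually.of_forall (fun X => mul_self_nonneg _)) hW2int (a ^ 2)
  set S := {X : Fin n → α | a ^ 2 ≤ W X * W X} with hS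
  have hfin : (Measure.pi fun _ : Fin n => μ) S ≠ ⊤ := measure_ne_top _ _
  have htoReal : ((Measure.pi fun _ : Fin n => μ) S).toReal ≤ n / a ^ 2 := by
    rw [div_eq_inv_mul, ← hS] at *
    have ha2 : (0:ℝ) < a ^ 2 := by positivity
    calc ((Measure.pi fun _ : Fin n => μ) S).toReal
        = (a^2)⁻¹ * (a^2 * ((Measure.pi fun _ : Fin n => μ) S).toReal) := by
          field_simp
      _ ≤ (a^2)⁻¹ * n := by
          apply mul_le_mul_of_nonneg_left _ (by positivity)
          exact le_trans hmarkov hW2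
  have hsub : {X : Fin n → α | a ≤ |∑ i, f (X i) - n * m|} ⊆ S := by
    intro X hX
    simp only [Set.mem_setOf_eq] at hX ⊢
    have hWX : ∑ i, f (X i) - n * m = W X := by
      simp only [hW, hg]
      rw [Finset.sum_sub_distrib]
      simp [mul_comm]
    rw [hWX] at hX
    calc a ^ 2 ≤ |W X| ^ 2 := by
          apply pow_le_pow_left₀ ha.le hX
      _ = W X * W X := by rw [sq_abs]; ring
  calc (Measure.pi fun _ : Fin n => μ) {X | a ≤ |∑ i, f (X i) - n * m|}
      ≤ (Measure.pi fun _ : Fin n => μ) S := measure_mono hsub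
    _ = ENNReal.ofReal (((Measure.pi fun _ : Fin n => μ) S).toReal) := by
        rw [ENNReal.ofReal_toReal hfin]
    _ ≤ ENNReal.ofReal (n / a ^ 2) := ENNReal.ofReal_le_ofReal htoReal

end Cheb

section Det

def Sstat {n d : ℕ} (X : Fin n → Fin d → ℝ) (k l : Fin d) : ℝ := ∑ i, X i k * X i l
def Tstat {n d : ℕ} (X : Fin n → Fin d → ℝ) (k : Fin d) : ℝ := ∑ i, X i k
def Mkl {d : ℕ} (k l : Fin d) : ℝ := if k = l then 1/3 else 1/4

lemma mulVec_center {n d : ℕ} (X : Fin n → Fin d → ℝ) (v : Fin d → ℝ) (i : Fin n) :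
    (centerMat n * toMat X).mulVec v i
      = (∑ k, X i k * v k) - (n:ℝ)⁻¹ * ∑ j, ∑ k, X j k * v k := by
  rw [← Matrix.mulVec_mulVec]
  have hXv : (toMat X).mulVec v = fun j => ∑ k, X j k * v k := by
    funext j; simp [Matrix.mulVec, dotProduct, toMat]
  rw [hXv, centerMat, Matrix.sub_mulVec, Matrix.one_mulVec, Matrix.smul_mulVec]
  simp [Matrix.mulVec, dotProduct, Finset.mul_sum]

lemma det_bound {n d : ℕ} (hn : 1 ≤ n) (hd : 1 ≤ d) (X : Fin n → Fin d → ℝ)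
    (h2 : ∀ k l : Fin d, |Sstat X k l - n * Mkl k l| ≤ n * (72*d:ℝ)⁻¹)
    (h1 : ∀ k : Fin d, |Tstat X k - n * (1/2)| ≤ n * (72*d:ℝ)⁻¹) :
    Real.sqrt (24:ℝ)⁻¹ * Real.sqrt n ≤ sMin (centerMat n * toMat X) := by
  set ε : ℝ := (72*d:ℝ)⁻¹ with hε
  have hnR : (0:ℝ) < n := by exact_mod_cast hn
  have hdR : (0:ℝ) < d := by exact_mod_cast hd
  apply le_csInf
  · refine ⟨_, ⟨Pi.single ⟨0, hd⟩ 1, ?_, rfl⟩⟩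
    rw [Finset.sum_eq_single (⟨0, hd⟩ : Fin d)]
    · simp
    · intro b _ hb; simp [Pi.single_eq_of_ne hb]
    · simp
  · rintro t ⟨v, hv, rfl⟩
    set a : Fin n → ℝ := fun i => ∑ k, X i k * v k with ha
    set s : ℝ := ∑ i, a i with hs
    have hAv : ∀ i, (centerMat n * toMat X).mulVec v i = a i - (n:ℝ)⁻¹ * s :=
      fun i => mulVec_center X v i
    have hQ : ∑ i, ((centerMat n * toMat X).mulVec v i) ^ 2
        = (∑ i, a i ^ 2) - (n:ℝ)⁻¹ * s ^ 2 := by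
      simp_rw [hAv]
      have : ∀ i, (a i - (n:ℝ)⁻¹ * s)^2
          = a i^2 - (2*((n:ℝ)⁻¹*s))*a i + ((n:ℝ)⁻¹*s)^2 := fun i => by ring
      simp_rw [this, Finset.sum_add_distrib, Finset.sum_sub_distrib, ← Finset.mul_sum,
        Finset.sum_const, Finset.card_univ, Fintype.card_fin, nsmul_eq_mul, ← hs]
      field_simp
      ring
    have hsum_sq : ∑ i, a i ^ 2 = ∑ k, ∑ l, v k * v l * Sstat X k l := by
      simp_rw [ha, sq, Finset.sum_mul_sum]
      rw [Finset.sum_comm]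
      congr 1; funext k
      rw [Finset.sum_comm]
      congr 1; funext l
      rw [Sstat, Finset.mul_sum]
      congr 1; funext i; ring
    have hs_eq : s = ∑ k, v k * Tstat X k := by
      rw [hs, ha, Finset.sum_comm]
      congr 1; funext k
      rw [Tstat, Finset.mul_sum]
      congr 1; funext i; ring
    set σ : ℝ := ∑ k, v k with hσ
    set P : ℝ := ∑ k, |v k| with hP
    have hP2 : P ^ 2 ≤ d := by
      have := sq_sum_le_card_mul_sum_sq (s := Finset.univ) (f := fun k : Fin d => |v k|)
      simpa [sq_abs, hv] using this
    have hPnn : 0 ≤ P := Finset.sum_nonneg fun k _ => abs_nonneg _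
    set δ : Fin d → Fin d → ℝ := fun k l => Sstat X k l - n * Mkl k l with hδ
    set τ : Fin d → ℝ := fun k => Tstat X k - n * (1/2) with hτ
    set t : ℝ := ∑ k, v k * τ k with ht
    set Δ : ℝ := ∑ k, ∑ l, v k * v l * δ k l with hΔ
    have hM : ∑ k, ∑ l, v k * v l * Mkl k l = 1/12 + 1/4 * σ ^ 2 := by
      have : ∀ k l : Fin d, v k * v l * Mkl k l
          = v k * v l * (1/4) + (if l = k then v k * v l * (1/12) else 0) := by
        intro k l
        rw [Mkl]
        by_cases hkl : k = l <;> simp [hkl, eq_comm] <;> ring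
      simp_rw [this, Finset.sum_add_distrib, Finset.sum_ite_eq' Finset.univ, Finset.mem_univ,
        if_true]
      have e1 : ∑ k : Fin d, ∑ l : Fin d, v k * v l * (1/4) = 1/4 * σ^2 := by
        rw [hσ, sq, Finset.sum_mul_sum]
        simp_rw [Finset.mul_sum]
        congr 1; funext k; congr 1; funext l; ring
      have e2 : ∑ k : Fin d, v k * v k * (1/12) = 1/12 := by
        have : ∀ k : Fin d, v k * v k * (1/12) = v k ^2 * (1/12) := fun k => by ring
        simp_rw [this, ← Finset.sum_mul, hv]; ring
      rw [e1, e2]; ring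
    have hSexp : ∑ k, ∑ l, v k * v l * Sstat X k l
        = n * (1/12 + 1/4 * σ ^ 2) + Δ := by
      rw [hΔ]
      rw [← hM]
      rw [Finset.mul_sum, ← Finset.sum_add_distrib]
      congr 1; funext k
      rw [Finset.mul_sum, ← Finset.sum_add_distrib]
      congr 1; funext l
      simp only [hδ]; ring
    have hTexp : s = n * (σ/2) + t := by
      have e : ↑n * (σ/2) + t = ∑ k, (↑n * (v k/2) + v k * τ k) := by
        rw [Finset.sum_add_distrib, ← Finset.mul_sum, ← Finset.sum_div, ← hσ, ← ht]
      rw [hs_eq, e]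
      congr 1; funext k
      simp only [hτ]; ring
    have hεpos : 0 < ε := by rw [hε]; positivity
    have hεd : ε * d = 1/72 := by rw [hε]; field_simp
    have hΔb : |Δ| ≤ n * ε * d := by
      calc |Δ| ≤ ∑ k, |∑ l, v k * v l * δ k l| := Finset.abs_sum_le_sum_abs _ _
        _ ≤ ∑ k, ∑ l, |v k * v l * δ k l| :=
            Finset.sum_le_sum fun k _ => Finset.abs_sum_le_sum_abs _ _
        _ ≤ ∑ k, ∑ l : Fin d, |v k| * |v l| * (n * ε) := by
            apply Finset.sum_le_sum; intro k _
            apply Finset.sum_le_sum; intro l _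
            rw [abs_mul, abs_mul]
            exact mul_le_mul_of_nonneg_left (h2 k l) (by positivity)
        _ = ↑n * ε * P ^ 2 := by
            rw [hP, sq, Finset.sum_mul_sum, Finset.mul_sum]
            congr 1; funext k
            rw [Finset.mul_sum]
            congr 1; funext l
            ring
        _ ≤ ↑n * ε * d := by
            apply mul_le_mul_of_nonneg_left hP2 (by positivity)
    have hτb : ∀ k, |τ k| ≤ ↑n * ε := fun k => h1 k
    have htb : |t| ≤ P * (↑n * ε) := by
      calc |t| ≤ ∑ k, |v k * τ k| := Finset.abs_sum_le_sum_abs _ _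
        _ ≤ ∑ k, |v k| * (↑n * ε) := by
            apply Finset.sum_le_sum; intro k _
            rw [abs_mul]
            exact mul_le_mul_of_nonneg_left (hτb k) (abs_nonneg _)
        _ = P * (↑n * ε) := by rw [hP, Finset.sum_mul]
    have hσb : |σ| ≤ P := by
      rw [hσ, hP]; exact Finset.abs_sum_le_sum_abs _ _
    have hnne : (n:ℝ) ≠ 0 := ne_of_gt hnR
    have hQval : ∑ i, ((centerMat n * toMat X).mulVec v i) ^ 2
        = ↑n/12 + Δ - σ * t - (↑n)⁻¹ * t ^ 2 := by
      rw [hQ, hsum_sq, hSexp, hTexp]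
      field_simp
      ring
    have hσt : σ * t ≤ ↑n * ε * d := by
      calc σ * t ≤ |σ * t| := le_abs_self _
        _ = |σ| * |t| := abs_mul _ _
        _ ≤ P * (P * (↑n * ε)) := by
            apply mul_le_mul hσb htb (abs_nonneg _) hPnn
        _ = ↑n * ε * P ^ 2 := by ring
        _ ≤ ↑n * ε * d := mul_le_mul_of_nonneg_left hP2 (by positivity)
    have ht2 : (↑n)⁻¹ * t ^ 2 ≤ ↑n * ε * d := by
      have h1' : t ^ 2 ≤ (P * (↑n * ε)) ^ 2 := by
        rw [← sq_abs t]
        exact pow_le_pow_left₀ (abs_nonneg _) htb 2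
      have h2' : (↑n)⁻¹ * t ^ 2 ≤ (↑n)⁻¹ * (P * (↑n * ε)) ^ 2 :=
        mul_le_mul_of_nonneg_left h1' (by positivity)
      have h3' : (↑n)⁻¹ * (P * (↑n * ε)) ^ 2 = ↑n * ε ^ 2 * P ^ 2 := by
        field_simp
      have h4' : ↑n * ε ^ 2 * P ^ 2 ≤ ↑n * ε ^ 2 * d :=
        mul_le_mul_of_nonneg_left hP2 (by positivity)
      have hd1 : (1:ℝ) ≤ d := by exact_mod_cast hd
      have hεle : ε ≤ 1 := by
        rw [hε, inv_le_one_iff₀]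
        right; linarith
      have hε2 : ε ^ 2 ≤ ε := by
        rw [sq]; exact mul_le_of_le_one_left hεpos.le hεle
      have h5' : ↑n * ε ^ 2 * d ≤ ↑n * ε * d := by
        calc ↑n * ε ^ 2 * d = (↑n * d) * ε ^ 2 := by ring
          _ ≤ (↑n * d) * ε := mul_le_mul_of_nonneg_left hε2 (by positivity)
          _ = ↑n * ε * d := by ring
      linarith
    have hΔlb : -(↑n * ε * d) ≤ Δ := neg_le_of_abs_le hΔb
    have hQlb : (24:ℝ)⁻¹ * ↑n ≤ ∑ i, ((centerMat n * toMat X).mulVec v i) ^ 2 := by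
      rw [hQval]
      have h72 : ↑n * ε * d = ↑n * (1/72) := by
        rw [mul_assoc, hεd]
      rw [h72] at hσt ht2 hΔlb
      linarith
    rw [← Real.sqrt_mul (by norm_num : (0:ℝ) ≤ (24:ℝ)⁻¹)]
    exact Real.sqrt_le_sqrt hQlb

end Det

section Moments

lemma uniformCube_eq (d : ℕ) : uniformCube d = Measure.pi fun _ : Fin d => mu1 := rfl
lemma designMeasure_eq (n d : ℕ) :
    designMeasure n d = Measure.pi fun _ : Fin n => uniformCube d := rfl

instance (d : ℕ) : IsProbabilityMeasure (uniformCube d) := by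
  rw [uniformCube_eq]; infer_instance
instance (n d : ℕ) : IsProbabilityMeasure (designMeasure n d) := by
  rw [designMeasure_eq]; infer_instance

lemma mom_id : ∫ y : ℝ, y ∂mu1 = 1/2 := by
  have h := mom_pow 1
  simp only [pow_one] at h
  rw [h]; norm_num
lemma mom_sq : ∫ y : ℝ, y * y ∂mu1 = 1/3 := by
  have h := mom_pow 2
  norm_num at h
  calc ∫ y : ℝ, y * y ∂mu1 = ∫ y : ℝ, y ^ 2 ∂mu1 := by congr 1; funext y; ring
    _ = 1/3 := by rw [h]; try norm_num
lemma mom_four : ∫ y : ℝ, (y * y) * (y * y) ∂mu1 = 1/5 := by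
  have h := mom_pow 4
  norm_num at h
  calc ∫ y : ℝ, (y * y) * (y * y) ∂mu1 = ∫ y : ℝ, y ^ 4 ∂mu1 := by congr 1; funext y; ring
    _ = 1/5 := by rw [h]; try norm_num

lemma int_id : Integrable (fun y : ℝ => y) mu1 := by
  have := int_pow 1; simpa using this
lemma int_sq : Integrable (fun y : ℝ => y * y) mu1 := by
  have := int_pow 2; simpa [pow_two] using this
lemma int_four : Integrable (fun y : ℝ => (y * y) * (y * y)) mu1 := by
  have h := int_pow 4
  have e : (fun y : ℝ => y ^ 4) = fun y : ℝ => (y * y) * (y * y) := by funext y; ring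
  rwa [e] at h

lemma I1 (d : ℕ) (k : Fin d) : ∫ x : Fin d → ℝ, x k ∂(uniformCube d) = 1/2 := by
  rw [uniformCube_eq]
  have h := coord_integral mu1 (fun y : ℝ => y) k
  beta_reduce at h
  rw [mom_id] at h
  rw [h]

lemma I2 (d : ℕ) (k l : Fin d) :
    ∫ x : Fin d → ℝ, x k * x l ∂(uniformCube d) = Mkl k l := by
  rw [uniformCube_eq, Mkl]
  by_cases hkl : k = l
  · subst hkl
    rw [if_pos rfl]
    have h := coord_integral mu1 (fun y : ℝ => y * y) k
    beta_reduce at h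
    rw [mom_sq] at h
    rw [h]
  · rw [if_neg hkl]
    have h := coord2_integral mu1 (fun y : ℝ => y) (fun y : ℝ => y) hkl
    beta_reduce at h
    rw [mom_id] at h
    rw [h]; norm_num

lemma J1 (d : ℕ) (k : Fin d) : Integrable (fun x : Fin d → ℝ => x k) (uniformCube d) := by
  rw [uniformCube_eq]
  have := coord_integrable mu1 (fun y : ℝ => y) int_id k
  simpa using this

lemma J2 (d : ℕ) (k l : Fin d) :
    Integrable (fun x : Fin d → ℝ => x k * x l) (uniformCube d) := by
  rw [uniformCube_eq]
  by_cases hkl : k = l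
  · subst hkl
    have := coord_integrable mu1 (fun y : ℝ => y * y) int_sq k
    simpa using this
  · have := coord2_integrable mu1 (fun y : ℝ => y) (fun y : ℝ => y) int_id int_id hkl
    simpa using this

lemma J2sq (d : ℕ) (k l : Fin d) :
    Integrable (fun x : Fin d → ℝ => (x k * x l) * (x k * x l)) (uniformCube d) := by
  rw [uniformCube_eq]
  by_cases hkl : k = l
  · subst hkl
    have := coord_integrable mu1 (fun y : ℝ => (y * y) * (y * y)) int_four k
    simpa using this
  · have := coord2_integrable mu1 (fun y : ℝ => y * y) (fun y : ℝ => y * y) int_sq int_sq hkl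
    have e : (fun x : Fin d → ℝ => (x k * x k) * (x l * x l))
        = fun x : Fin d → ℝ => (x k * x l) * (x k * x l) := by funext x; ring
    rw [← e]
    simpa using this

lemma I2sq (d : ℕ) (k l : Fin d) :
    ∫ x : Fin d → ℝ, (x k * x l) * (x k * x l) ∂(uniformCube d) ≤ 1 := by
  rw [uniformCube_eq]
  by_cases hkl : k = l
  · subst hkl
    have h := coord_integral mu1 (fun y : ℝ => (y * y) * (y * y)) k
    beta_reduce at h
    rw [mom_four] at h
    rw [h]; norm_num
  · have h := coord2_integral mu1 (fun y : ℝ => y * y) (fun y : ℝ => y * y) hkl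
    beta_reduce at h
    rw [mom_sq] at h
    have e : (fun x : Fin d → ℝ => (x k * x k) * (x l * x l))
        = fun x : Fin d → ℝ => (x k * x l) * (x k * x l) := by funext x; ring
    rw [← e, h]; norm_num

end Moments

section MainAux

theorem uniform_configuration_well_conditioned'
    (d : ℕ) (hd : 1 ≤ d) :
    ∃ c₁ : ℝ, 0 < c₁ ∧
      Tendsto
        (fun n : ℕ =>
          designMeasure n d
            {Xstar | c₁ * Real.sqrt n ≤ sMin (centerMat n * toMat Xstar)})
        atTop (nhds 1) := by
  classical
  have hdR : (0:ℝ) < d := by exact_mod_cast hd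
  set ε : ℝ := (72*(d:ℝ))⁻¹ with hε
  have hεpos : 0 < ε := by rw [hε]; positivity
  set C : ℝ := ((d:ℝ)*d + d) / ε^2 with hC
  refine ⟨Real.sqrt (24:ℝ)⁻¹, Real.sqrt_pos.mpr (by norm_num), ?_⟩
  have key : ∀ n : ℕ, 1 ≤ n →
      1 - ENNReal.ofReal (C / n) ≤ designMeasure n d
        {Xstar | Real.sqrt (24:ℝ)⁻¹ * Real.sqrt n ≤ sMin (centerMat n * toMat Xstar)} := by
    intro n hn
    have hnR : (0:ℝ) < n := by exact_mod_cast hn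
    have hnεpos : (0:ℝ) < (n:ℝ) * ε := by positivity
    set Bad2 : Fin d → Fin d → Set (Fin n → Fin d → ℝ) :=
      fun k l => {X | (n:ℝ)*ε ≤ |∑ i, X i k * X i l - n * Mkl k l|} with hBad2
    set Bad1 : Fin d → Set (Fin n → Fin d → ℝ) :=
      fun k => {X | (n:ℝ)*ε ≤ |∑ i, X i k - n * (1/2)|} with hBad1
    set c : ℝ≥0∞ := ENNReal.ofReal ((n:ℝ) / ((n:ℝ)*ε)^2) with hc
    have hm2 : ∀ k l, designMeasure n d (Bad2 k l) ≤ c := by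
      intro k l
      have h := cheb (uniformCube d) (fun x => x k * x l) (J2 d k l) (J2sq d k l)
        (I2sq d k l) n hnεpos
      beta_reduce at h
      rw [I2 d k l] at h
      exact h
    have hm1 : ∀ k, designMeasure n d (Bad1 k) ≤ c := by
      intro k
      have hb : ∫ x : Fin d → ℝ, x k * x k ∂(uniformCube d) ≤ 1 := by
        rw [I2 d k k]; norm_num [Mkl]
      have h := cheb (uniformCube d) (fun x => x k) (J1 d k) (J2 d k k) hb n hnεpos
      beta_reduce at h
      rw [I1 d k] at h
      exact h
    set Bad : Set (Fin n → Fin d → ℝ) := (⋃ k, ⋃ l, Bad2 k l) ∪ ⋃ k, Bad1 k with hBadDef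
    have hBad : designMeasure n d Bad ≤ ENNReal.ofReal (C / n) := by
      have h1 : designMeasure n d Bad ≤ ((d:ℝ≥0∞) * (d:ℝ≥0∞)) * c + (d:ℝ≥0∞) * c := by
        calc designMeasure n d Bad
            ≤ designMeasure n d (⋃ k, ⋃ l, Bad2 k l) + designMeasure n d (⋃ k, Bad1 k) :=
              measure_union_le _ _
          _ ≤ (∑ _k : Fin d, ∑ _l : Fin d, c) + ∑ _k : Fin d, c := by
              apply add_le_add
              · refine (measure_iUnion_fintype_le _ _).trans ?_
                refine Finset.sum_le_sum fun k _ => ?_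
                refine (measure_iUnion_fintype_le _ _).trans ?_
                exact Finset.sum_le_sum fun l _ => hm2 k l
              · refine (measure_iUnion_fintype_le _ _).trans ?_
                exact Finset.sum_le_sum fun k _ => hm1 k
          _ = ((d:ℝ≥0∞) * (d:ℝ≥0∞)) * c + (d:ℝ≥0∞) * c := by
              simp only [Finset.sum_const, Finset.card_univ, Fintype.card_fin, nsmul_eq_mul]
              ring
      refine h1.trans ?_
      have e1 : ((d:ℝ≥0∞) * (d:ℝ≥0∞)) * c + (d:ℝ≥0∞) * c = ((d*d+d : ℕ) : ℝ≥0∞) * c := by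
        push_cast
        ring
      have e2 : ((d*d+d : ℕ) : ℝ≥0∞) * c
          = ENNReal.ofReal (((d*d+d : ℕ) : ℝ) * ((n:ℝ) / ((n:ℝ)*ε)^2)) := by
        rw [hc, ← ENNReal.ofReal_natCast (d*d+d),
          ← ENNReal.ofReal_mul (Nat.cast_nonneg _)]
      rw [e1, e2]
      apply ENNReal.ofReal_le_ofReal
      apply le_of_eq
      rw [hC]
      have hεne : ε ≠ 0 := ne_of_gt hεpos
      have hnne : (n:ℝ) ≠ 0 := ne_of_gt hnR
      push_cast
      field_simp
    have hsub : Badᶜ ⊆ {Xstar : Fin n → Fin d → ℝ |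
        Real.sqrt (24:ℝ)⁻¹ * Real.sqrt n ≤ sMin (centerMat n * toMat Xstar)} := by
      intro X hX
      simp only [hBadDef, Set.mem_compl_iff, Set.mem_union, Set.mem_iUnion, not_or,
        not_exists] at hX
      obtain ⟨hX2, hX1⟩ := hX
      refine det_bound hn hd X (fun k l => ?_) (fun k => ?_)
      · have h := hX2 k l
        simp only [hBad2, Set.mem_setOf_eq, not_le] at h
        rw [hε] at h
        exact h.le
      · have h := hX1 k
        simp only [hBad1, Set.mem_setOf_eq, not_le] at h
        rw [hε] at h
        exact h.le
    calc 1 - ENNReal.ofReal (C / n) ≤ 1 - designMeasure n d Bad := tsub_le_tsub_left hBad 1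
      _ ≤ designMeasure n d Badᶜ := by
          rw [tsub_le_iff_right]
          have h := measure_union_le (μ := designMeasure n d) Bad Badᶜ
          rw [Set.union_compl_self, measure_univ] at h
          calc (1:ℝ≥0∞) ≤ designMeasure n d Bad + designMeasure n d Badᶜ := h
            _ = designMeasure n d Badᶜ + designMeasure n d Bad := add_comm _ _
      _ ≤ _ := measure_mono hsub
  have hBnd0 : Tendsto (fun n : ℕ => ENNReal.ofReal (C / n)) atTop (nhds 0) := by
    have h := tendsto_const_div_atTop_nhds_zero_nat C
    have h2 := (ENNReal.continuous_ofReal.tendsto 0).comp h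
    simpa [Function.comp_def] using h2
  apply tendsto_of_tendsto_of_tendsto_of_le_of_le'
    (g := fun n : ℕ => 1 - ENNReal.ofReal (C / n)) (h := fun _ : ℕ => (1:ℝ≥0∞))
  · have h : Tendsto (fun n : ℕ => 1 - ENNReal.ofReal (C / n)) atTop (nhds (1 - 0)) :=
      ENNReal.Tendsto.sub tendsto_const_nhds hBnd0 (Or.inl ENNReal.one_ne_top)
    simpa using h
  · exact tendsto_const_nhds
  · filter_upwards [eventually_ge_atTop 1] with n hn using key n hn
  · filter_upwards with n using prob_le_one

end MainAux


/-- Lemma A.8: well-conditioning of uniform random configurations;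
with probability tending to one, the smallest singular value of the centered
configuration is at least `c₁ √n`. -/
theorem uniform_configuration_well_conditioned
    (d : ℕ) (hd : 1 ≤ d) :
    ∃ c₁ : ℝ, 0 < c₁ ∧
      Tendsto
        (fun n : ℕ =>
          designMeasure n d
            {Xstar | c₁ * Real.sqrt n ≤ sMin (centerMat n * toMat Xstar)})
        atTop (nhds 1) := by
  exact uniform_configuration_well_conditioned' d hd
end
end

section
/- Derivative of the capped mean and its lower bound (equations A.24–A.25). Fix σ > 0 and M > 0. Let μ_M(r) = E[T_M([r+σZ]₊)] for Z standard normal. Then μ_M is differentiable on [0, M] with μ_M′(r) = Φ((M−r)/σ) − Φ(−r/σ) = Φ((M−r)/σ) + Φ(r/σ) − 1, and for all r ∈ [0, M], μ_M′(r) ≥ Φ(M/(2σ)) − 1/2 > 0. -/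
open MeasureTheory ProbabilityTheory Filter

noncomputable section

section Aux
open Real Set

lemma stdPDF_cont : Continuous stdPDF := by unfold stdPDF; fun_prop
lemma stdPDF_pos (x : ℝ) : 0 < stdPDF x :=
  div_pos (Real.exp_pos _) (Real.sqrt_pos.2 (by positivity))
lemma stdPDF_nonneg (x : ℝ) : 0 ≤ stdPDF x := (stdPDF_pos x).le
lemma stdPDF_even (x : ℝ) : stdPDF (-x) = stdPDF x := by simp [stdPDF]
lemma stdPDF_integrable : Integrable stdPDF := by
  have h : Integrable (fun x : ℝ => Real.exp (-(1/2 : ℝ) * x ^ 2)) :=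
    integrable_exp_neg_mul_sq (by norm_num)
  have := h.div_const (Real.sqrt (2 * Real.pi))
  convert this using 2 with x
  · unfold stdPDF; rw [div_eq_div_iff (by positivity) (by positivity)]; ring_nf
lemma stdPDF_integral : ∫ x, stdPDF x = 1 := by
  have h : ∫ x : ℝ, Real.exp (-(1/2:ℝ) * x ^ 2) = Real.sqrt (Real.pi / (1/2)) :=
    integral_gaussian (1/2)
  have h2 : ∫ x : ℝ, stdPDF x = (∫ x : ℝ, Real.exp (-(1/2:ℝ) * x ^ 2)) / Real.sqrt (2 * Real.pi) := by
    rw [← integral_div]; congr 1 with x; unfold stdPDF; ring_nf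
  rw [h2, h]
  rw [div_eq_one_iff_eq (by positivity)]
  congr 1; ring

lemma stdCDF_sub (x y : ℝ) : stdCDF y - stdCDF x = ∫ t in x..y, stdPDF t :=
  intervalIntegral.integral_Iic_sub_Iic stdPDF_integrable.integrableOn
    stdPDF_integrable.integrableOn

lemma hasDerivAt_stdPDF (x : ℝ) : HasDerivAt stdPDF (-x * stdPDF x) x := by
  have h1 : HasDerivAt (fun x : ℝ => -(x ^ 2) / 2) (-x) x := by
    have := ((hasDerivAt_pow 2 x).neg).div_const 2
    exact this.congr_deriv (by push_cast; ring)
  have h2 := (h1.exp).div_const (Real.sqrt (2 * Real.pi))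
  refine h2.congr_deriv ?_
  unfold stdPDF; ring

lemma hasDerivAt_stdCDF (x : ℝ) : HasDerivAt stdCDF (stdPDF x) x := by
  have heq : stdCDF = fun y => (∫ t in Set.Iic (0:ℝ), stdPDF t) + ∫ t in (0:ℝ)..y, stdPDF t := by
    funext y
    rw [← stdCDF_sub 0 y]; unfold stdCDF; ring
  rw [heq]
  have := (intervalIntegral.integral_hasStrictDerivAt_right
    (stdPDF_cont.intervalIntegrable 0 x)
    stdPDF_cont.stronglyMeasurable.stronglyMeasurableAtFilter
    stdPDF_cont.continuousAt).hasDerivAt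
  exact this.const_add _

lemma stdCDF_neg (x : ℝ) : stdCDF (-x) = 1 - stdCDF x := by
  have h1 : stdCDF x + ∫ t in Set.Ioi x, stdPDF t = 1 := by
    rw [← stdPDF_integral]
    exact intervalIntegral.integral_Iic_add_Ioi stdPDF_integrable.integrableOn stdPDF_integrable.integrableOn
  have h2 : stdCDF (-x) = ∫ t in Set.Ioi x, stdPDF t := by
    unfold stdCDF
    calc ∫ t in Set.Iic (-x), stdPDF t = ∫ t in Set.Iic (-x), stdPDF (-t) := by
          simp [stdPDF_even]
      _ = ∫ t in Set.Ioi x, stdPDF t := by rw [integral_comp_neg_Iic, neg_neg]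
  linarith

lemma stdCDF_mono {x y : ℝ} (h : x ≤ y) : stdCDF x ≤ stdCDF y := by
  have := stdCDF_sub x y
  have hpos : 0 ≤ ∫ t in x..y, stdPDF t :=
    intervalIntegral.integral_nonneg h (fun t _ => stdPDF_nonneg t)
  linarith

lemma stdCDF_strictMono {x y : ℝ} (h : x < y) : stdCDF x < stdCDF y := by
  have := stdCDF_sub x y
  have hpos : 0 < ∫ t in x..y, stdPDF t :=
    intervalIntegral.intervalIntegral_pos_of_pos_on (stdPDF_cont.intervalIntegrable x y)
      (fun t _ => stdPDF_pos t) h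
  linarith

lemma stdCDF_zero : stdCDF 0 = 1 / 2 := by
  have := stdCDF_neg 0
  rw [neg_zero] at this; linarith


lemma gaussianPDFReal_eq_stdPDF : gaussianPDFReal 0 1 = stdPDF := by
  funext x
  unfold gaussianPDFReal stdPDF
  push_cast
  rw [inv_mul_eq_div]
  norm_num

lemma integral_stdGaussian (g : ℝ → ℝ) :
    ∫ z, g z ∂stdGaussian = ∫ z, stdPDF z * g z := by
  unfold _root_.stdGaussian
  rw [gaussianReal_of_var_ne_zero _ one_ne_zero]
  have h : gaussianPDF 0 1 = fun x => ((stdPDF x).toNNReal : ENNReal) := by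
    funext x
    rw [gaussianPDF, gaussianPDFReal_eq_stdPDF, ENNReal.ofReal]
  rw [h, integral_withDensity_eq_integral_smul (stdPDF_cont.measurable.real_toNNReal) g]
  congr 1 with z
  rw [NNReal.smul_def, smul_eq_mul, Real.coe_toNNReal _ (stdPDF_nonneg z)]

lemma capPos_cont (M r σ : ℝ) : Continuous (fun z => capPos M (r + σ * z)) := by
  unfold capPos; fun_prop

lemma cappedMean_eq (σ M : ℝ) (hσ : 0 < σ) (hM : 0 < M) (r : ℝ) :
    cappedMean σ M r =
      (r * stdCDF ((M - r)/σ) - σ * stdPDF ((M - r)/σ))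
      - (r * stdCDF (-r/σ) - σ * stdPDF (-r/σ))
      + M * (1 - stdCDF ((M - r)/σ)) := by
  set a := -r/σ with ha
  set b := (M - r)/σ with hb
  have hab : a ≤ b := by
    apply div_le_div_of_nonneg_right ?_ hσ.le
    linarith
  set h : ℝ → ℝ := fun z => stdPDF z * capPos M (r + σ * z) with hh
  have hcont : Continuous h := stdPDF_cont.mul (capPos_cont M r σ)
  have hcap_nonneg : ∀ u, 0 ≤ capPos M u := fun u => le_min hM.le (le_max_right u 0)
  have hcap_le : ∀ u, capPos M u ≤ M := fun u => min_le_left _ _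
  have hint : Integrable h := by
    refine (stdPDF_integrable.const_mul M).mono' hcont.aestronglyMeasurable (ae_of_all _ ?_)
    intro z
    rw [Real.norm_eq_abs, abs_of_nonneg (mul_nonneg (stdPDF_nonneg z) (hcap_nonneg _))]
    calc stdPDF z * capPos M (r + σ * z) ≤ stdPDF z * M :=
          mul_le_mul_of_nonneg_left (hcap_le _) (stdPDF_nonneg z)
      _ = M * stdPDF z := mul_comm _ _
  have hsplit1 : (∫ z in Set.Iic a, h z) + (∫ z in Set.Ioi a, h z) = ∫ z, h z := by
    have := integral_add_compl (measurableSet_Iic (a := a)) hint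
    rwa [compl_Iic] at this
  have hIic : (∫ z in Set.Iic a, h z) = 0 := by
    rw [setIntegral_congr_fun measurableSet_Iic (g := fun _ => (0:ℝ)) ?_, integral_zero]
    intro z hz
    have hz' : r + σ * z ≤ 0 := by
      rw [Set.mem_Iic, ha, le_div_iff₀ hσ] at hz
      nlinarith
    simp only [hh, capPos, max_eq_right hz', min_eq_right hM.le, mul_zero]
  have hsplit2 : (∫ z in Set.Ioi a, h z) =
      (∫ z in Set.Ioc a b, h z) + (∫ z in Set.Ioi b, h z) := by
    rw [← Set.Ioc_union_Ioi_eq_Ioi hab]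
    exact setIntegral_union (Set.Ioc_disjoint_Ioi le_rfl) measurableSet_Ioi
      hint.integrableOn hint.integrableOn
  have hIoc : (∫ z in Set.Ioc a b, h z) =
      (r * stdCDF b - σ * stdPDF b) - (r * stdCDF a - σ * stdPDF a) := by
    have hcongr : (∫ z in Set.Ioc a b, h z) =
        ∫ z in Set.Ioc a b, stdPDF z * (r + σ * z) := by
      refine setIntegral_congr_fun measurableSet_Ioc (fun z hz => ?_)
      obtain ⟨hz1, hz2⟩ := hz
      have h1 : 0 ≤ r + σ * z := by
        rw [ha, div_lt_iff₀ hσ] at hz1; nlinarith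
      have h2 : r + σ * z ≤ M := by
        rw [hb, le_div_iff₀ hσ] at hz2; nlinarith
      simp only [hh, capPos, max_eq_left h1, min_eq_right h2]
    rw [hcongr, ← intervalIntegral.integral_of_le hab]
    refine intervalIntegral.integral_eq_sub_of_hasDerivAt (f := fun z => r * stdCDF z - σ * stdPDF z) (fun z _ => ?_) ?_
    · have h1 := (hasDerivAt_stdCDF z).const_mul r
      have h2 := (hasDerivAt_stdPDF z).const_mul σ
      exact (h1.sub h2).congr_deriv (by ring)
    · exact (stdPDF_cont.mul (by fun_prop)).intervalIntegrable a b
  have hIoi : (∫ z in Set.Ioi b, h z) = M * (1 - stdCDF b) := by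
    have hcongr : (∫ z in Set.Ioi b, h z) = ∫ z in Set.Ioi b, stdPDF z * M := by
      refine setIntegral_congr_fun measurableSet_Ioi (fun z hz => ?_)
      have h1 : M ≤ r + σ * z := by
        rw [Set.mem_Ioi, hb, div_lt_iff₀ hσ] at hz; nlinarith
      have h0 : (0:ℝ) ≤ r + σ * z := le_trans hM.le h1
      simp only [hh, capPos, max_eq_left h0, min_eq_left h1]
    have hone : stdCDF b + (∫ z in Set.Ioi b, stdPDF z) = 1 := by
      rw [← stdPDF_integral]
      exact intervalIntegral.integral_Iic_add_Ioi stdPDF_integrable.integrableOn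
        stdPDF_integrable.integrableOn
    rw [hcongr]
    rw [integral_mul_const]
    have he : (∫ z in Set.Ioi b, stdPDF z) = 1 - stdCDF b := by linarith
    rw [he, mul_comm]
  have : cappedMean σ M r = ∫ z, h z := integral_stdGaussian _
  rw [this, ← hsplit1, hIic, hsplit2, hIoc, hIoi]
  ring

lemma hasDerivAt_cappedMean (σ M : ℝ) (hσ : 0 < σ) (hM : 0 < M) (r : ℝ) :
    HasDerivAt (cappedMean σ M) (stdCDF ((M - r)/σ) - stdCDF (-r/σ)) r := by
  have heq : cappedMean σ M = fun r =>
      (r * stdCDF ((M - r)/σ) - σ * stdPDF ((M - r)/σ))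
      - (r * stdCDF (-r/σ) - σ * stdPDF (-r/σ))
      + M * (1 - stdCDF ((M - r)/σ)) := funext (cappedMean_eq σ M hσ hM)
  rw [heq]
  have hbr : HasDerivAt (fun r : ℝ => (M - r)/σ) (-1/σ) r := by
    have := ((hasDerivAt_id r).const_sub M).div_const σ
    exact this
  have har : HasDerivAt (fun r : ℝ => -r/σ) (-1/σ) r := by
    have := ((hasDerivAt_id r).neg).div_const σ
    exact this
  have hΦb : HasDerivAt (fun r : ℝ => stdCDF ((M - r)/σ))
      (stdPDF ((M - r)/σ) * (-1/σ)) r := (hasDerivAt_stdCDF _).comp r hbr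
  have hφb : HasDerivAt (fun r : ℝ => stdPDF ((M - r)/σ))
      ((-((M - r)/σ) * stdPDF ((M - r)/σ)) * (-1/σ)) r := (hasDerivAt_stdPDF _).comp r hbr
  have hΦa : HasDerivAt (fun r : ℝ => stdCDF (-r/σ))
      (stdPDF (-r/σ) * (-1/σ)) r := (hasDerivAt_stdCDF _).comp r har
  have hφa : HasDerivAt (fun r : ℝ => stdPDF (-r/σ))
      ((-(-r/σ) * stdPDF (-r/σ)) * (-1/σ)) r := (hasDerivAt_stdPDF _).comp r har
  have big := ((((hasDerivAt_id r).mul hΦb).sub (hφb.const_mul σ)).sub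
      (((hasDerivAt_id r).mul hΦa).sub (hφa.const_mul σ))).add
      ((hΦb.const_sub 1).const_mul M)
  refine big.congr_deriv ?_
  field_simp
  simp only [id]
  ring

end Aux

/-- equations A.24–A.25: derivative of the capped mean and its
lower bound on `[0, M]`. -/
theorem capped_mean_derivative
    (σ M : ℝ) (hσ : 0 < σ) (hM : 0 < M) :
    (∀ r ∈ Set.Icc (0 : ℝ) M,
        HasDerivAt (cappedMean σ M) (stdCDF ((M - r) / σ) - stdCDF (-r / σ)) r) ∧
    (∀ r ∈ Set.Icc (0 : ℝ) M,
        stdCDF ((M - r) / σ) - stdCDF (-r / σ) =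
          stdCDF ((M - r) / σ) + stdCDF (r / σ) - 1) ∧
    (∀ r ∈ Set.Icc (0 : ℝ) M,
        stdCDF (M / (2 * σ)) - 1 / 2 ≤ stdCDF ((M - r) / σ) - stdCDF (-r / σ)) ∧
    0 < stdCDF (M / (2 * σ)) - 1 / 2 := by
  refine ⟨fun r _ => hasDerivAt_cappedMean σ M hσ hM r, fun r _ => ?_, fun r hr => ?_, ?_⟩
  · rw [neg_div, stdCDF_neg]; ring
  · obtain ⟨hr0, hrM⟩ := hr
    have key : stdCDF (-r/σ) = 1 - stdCDF (r/σ) := by rw [neg_div, stdCDF_neg]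
    rw [key]
    rcases le_total r (M/2) with h | h
    · have h1 : stdCDF (M/(2*σ)) ≤ stdCDF ((M - r)/σ) := by
        apply stdCDF_mono
        rw [div_le_div_iff₀ (by positivity) hσ]
        nlinarith
      have h2 : (1:ℝ)/2 ≤ stdCDF (r/σ) := by
        rw [← stdCDF_zero]
        exact stdCDF_mono (by positivity)
      linarith
    · have h1 : stdCDF (M/(2*σ)) ≤ stdCDF (r/σ) := by
        apply stdCDF_mono
        rw [div_le_div_iff₀ (by positivity) hσ]
        nlinarith
      have h2 : (1:ℝ)/2 ≤ stdCDF ((M - r)/σ) := by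
        rw [← stdCDF_zero]
        exact stdCDF_mono (div_nonneg (by linarith) hσ.le)
      linarith
  · have h := stdCDF_strictMono (show (0:ℝ) < M/(2*σ) by positivity)
    rw [stdCDF_zero] at h
    linarith
end
end

section
/- Centered Gram matrix perturbation bound (equation A.35). Fix d ≥ 1 and let X, X⋆ ∈ ([0,1]^d)ⁿ. Let G(X) = −(1/2) J D²(X) J = X_c X_cᵀ be the centered Gram matrix, where D²(X) has entries ‖x_i − x_j‖², J = I − n⁻¹11ᵀ, and X_c = JX. Then ‖G(X) − G(X⋆)‖_F ≤ √(2dN · Δ_dist(X, X⋆)), where N = n(n−1)/2 and Δ_dist(X, X⋆) = N⁻¹ Σ_{i<j} (‖x_i − x_j‖ − ‖x_i⋆ − x_j⋆‖)². -/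
open MeasureTheory ProbabilityTheory Filter

noncomputable section

/-- Squared Frobenius norm. -/
def frobSq {m k : Type*} [Fintype m] [Fintype k] (A : Matrix m k ℝ) : ℝ :=
  ∑ i, ∑ j, (A i j) ^ 2

lemma frobSq_nonneg {m k : Type*} [Fintype m] [Fintype k] (A : Matrix m k ℝ) :
    0 ≤ frobSq A :=
  Finset.sum_nonneg fun _ _ => Finset.sum_nonneg fun _ _ => sq_nonneg _

lemma frobNorm_eq_sqrt {m k : Type*} [Fintype m] [Fintype k] (A : Matrix m k ℝ) :
    frobNorm A = Real.sqrt (frobSq A) := rfl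

lemma centerMat_mulVec (n : ℕ) (v : Fin n → ℝ) (i : Fin n) :
    (centerMat n).mulVec v i = v i - (n : ℝ)⁻¹ * ∑ j, v j := by
  simp [centerMat, Matrix.mulVec, dotProduct, Matrix.one_apply, sub_mul,
    Finset.sum_sub_distrib, Finset.sum_ite_eq, Finset.mul_sum]

lemma centerMat_symm (n : ℕ) (i j : Fin n) : centerMat n i j = centerMat n j i := by
  simp [centerMat, Matrix.one_apply]
  split_ifs with h1 h2 h2 <;> simp_all [eq_comm]

lemma sum_sq_centerMulVec (n : ℕ) (v : Fin n → ℝ) :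
    ∑ i, ((centerMat n).mulVec v i) ^ 2 ≤ ∑ i, v i ^ 2 := by
  rcases Nat.eq_zero_or_pos n with h | h
  · subst h; simp
  have hn : (n : ℝ) ≠ 0 := Nat.cast_ne_zero.mpr h.ne'
  have key : ∑ i, ((centerMat n).mulVec v i) ^ 2
      = ∑ i, v i ^ 2 - (n : ℝ)⁻¹ * (∑ j, v j) ^ 2 := by
    simp only [centerMat_mulVec]
    have expand : ∀ i : Fin n, (v i - (n : ℝ)⁻¹ * ∑ j, v j) ^ 2
        = v i ^ 2 - (2 * (n : ℝ)⁻¹ * ∑ j, v j) * v i + ((n : ℝ)⁻¹ * ∑ j, v j) ^ 2 := by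
      intro i; ring
    rw [Finset.sum_congr rfl fun i _ => expand i]
    rw [Finset.sum_add_distrib, Finset.sum_sub_distrib, ← Finset.mul_sum,
      Finset.sum_const, Finset.card_univ, Fintype.card_fin, nsmul_eq_mul]
    field_simp
    ring
  rw [key]
  have : 0 ≤ (n : ℝ)⁻¹ * (∑ j, v j) ^ 2 :=
    mul_nonneg (by positivity) (sq_nonneg _)
  linarith

lemma frobSq_centerMul {n : ℕ} (A : Matrix (Fin n) (Fin n) ℝ) :
    frobSq (centerMat n * A) ≤ frobSq A := by
  unfold frobSq
  rw [Finset.sum_comm]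
  rw [show ∑ i, ∑ j, (A i j) ^ 2 = ∑ j, ∑ i, (A i j) ^ 2 from Finset.sum_comm]
  apply Finset.sum_le_sum
  intro j _
  have := sum_sq_centerMulVec n (fun k => A k j)
  convert this using 2 <;> rfl

lemma frobSq_mulCenter {n : ℕ} (A : Matrix (Fin n) (Fin n) ℝ) :
    frobSq (A * centerMat n) ≤ frobSq A := by
  unfold frobSq
  apply Finset.sum_le_sum
  intro i _
  have := sum_sq_centerMulVec n (fun k => A i k)
  convert this using 2 with j
  · rfl
  have : (A * centerMat n) i j = (centerMat n).mulVec (fun k => A i k) j := by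
    simp only [Matrix.mul_apply, Matrix.mulVec, dotProduct]
    exact Finset.sum_congr rfl fun k _ => by rw [centerMat_symm n k j]; ring
  rw [this]

lemma rdist_nonneg {n d : ℕ} (X : Fin n → Fin d → ℝ) (i j : Fin n) :
    0 ≤ rdist X i j := Real.sqrt_nonneg _

lemma rdist_le_sqrt_d {n d : ℕ} {X : Fin n → Fin d → ℝ} (hX : X ∈ cube n d)
    (i j : Fin n) : rdist X i j ≤ Real.sqrt d := by
  apply Real.sqrt_le_sqrt
  calc ∑ k, (X i k - X j k) ^ 2 ≤ ∑ _k : Fin d, (1 : ℝ) := by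
        apply Finset.sum_le_sum
        intro k _
        have h1 := hX i k
        have h2 := hX j k
        simp only [Set.mem_Icc] at h1 h2
        nlinarith [h1.1, h1.2, h2.1, h2.2]
    _ = d := by simp

lemma rdist_symm {n d : ℕ} (X : Fin n → Fin d → ℝ) (i j : Fin n) :
    rdist X i j = rdist X j i := by
  unfold rdist eDist
  congr 1
  exact Finset.sum_congr rfl fun k _ => by ring

lemma doubleSum_eq_two_pairSum {n : ℕ} (f : Fin n → Fin n → ℝ)
    (hsymm : ∀ i j, f i j = f j i) (hdiag : ∀ i, f i i = 0) :
    ∑ i, ∑ j, f i j = 2 * pairSum f := by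
  have split : ∀ i j : Fin n, f i j
      = (if i < j then f i j else 0) + (if j < i then f i j else 0)
        + (if i = j then f i j else 0) := by
    intro i j
    rcases lt_trichotomy i j with h | h | h
    · simp [h, not_lt_of_gt h, h.ne]
    · simp [h, lt_irrefl]
    · simp [h, not_lt_of_gt h, h.ne', hdiag]
  calc ∑ i, ∑ j, f i j
      = (∑ i, ∑ j, if i < j then f i j else 0)
        + (∑ i, ∑ j, if j < i then f i j else 0)
        + (∑ i, ∑ j, if i = j then f i j else 0) := by
        simp only [← Finset.sum_add_distrib]
        exact Finset.sum_congr rfl fun i _ => Finset.sum_congr rfl fun j _ => split i j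
    _ = pairSum f + pairSum f + 0 := by
        have h2 : (∑ i, ∑ j, if j < i then f i j else 0) = pairSum f := by
          rw [Finset.sum_comm]
          unfold pairSum
          refine Finset.sum_congr rfl fun i _ => Finset.sum_congr rfl fun j _ => ?_
          by_cases h : i < j <;> simp [h, hsymm i j]
        have h3 : (∑ i, ∑ j, if i = j then f i j else 0) = 0 := by
          simp [hdiag]
        rw [h2, h3]
        rfl
    _ = 2 * pairSum f := by ring

lemma pairSum_nonneg {n : ℕ} (f : Fin n → Fin n → ℝ) (hf : ∀ i j, 0 ≤ f i j) :
    0 ≤ pairSum f := by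
  apply Finset.sum_nonneg
  intro i _
  apply Finset.sum_nonneg
  intro j _
  split_ifs
  · exact hf i j
  · exact le_refl 0

/-- equation A.35: centered Gram matrix perturbation bound. -/
theorem gram_matrix_perturbation
    (d : ℕ) (hd : 1 ≤ d) (n : ℕ)
    (X Xstar : Fin n → Fin d → ℝ) (hX : X ∈ cube n d) (hXstar : Xstar ∈ cube n d) :
    frobNorm (gramMat X - gramMat Xstar) ≤
      Real.sqrt (2 * d * numPairs n * distDiscrep X Xstar) := by
  set f : Fin n → Fin n → ℝ := fun i j => (rdist X i j - rdist Xstar i j) ^ 2 with hf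
  set P := pairSum f with hP
  have hPnn : 0 ≤ P := pairSum_nonneg f fun i j => sq_nonneg _
  -- Step 1: reduce to squared Frobenius norms
  rw [frobNorm_eq_sqrt]
  apply Real.sqrt_le_sqrt
  -- Step 2: the difference of Gram matrices
  have hdiff : gramMat X - gramMat Xstar
      = (-(1 / 2 : ℝ)) • (centerMat n * (sqDistMat X - sqDistMat Xstar) * centerMat n) := by
    unfold gramMat
    rw [Matrix.mul_sub, Matrix.sub_mul, smul_sub]
  have hscale : frobSq (gramMat X - gramMat Xstar)
      = (1 / 4 : ℝ) * frobSq (centerMat n * (sqDistMat X - sqDistMat Xstar) * centerMat n) := by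
    rw [hdiff]
    unfold frobSq
    rw [Finset.mul_sum]
    refine Finset.sum_congr rfl fun i _ => ?_
    rw [Finset.mul_sum]
    refine Finset.sum_congr rfl fun j _ => ?_
    simp [Matrix.smul_apply]
    ring
  -- Step 3: contraction by the centering matrix
  have hc1 : frobSq (centerMat n * (sqDistMat X - sqDistMat Xstar) * centerMat n)
      ≤ frobSq (centerMat n * (sqDistMat X - sqDistMat Xstar)) := frobSq_mulCenter _
  have hc2 : frobSq (centerMat n * (sqDistMat X - sqDistMat Xstar))
      ≤ frobSq (sqDistMat X - sqDistMat Xstar) := frobSq_centerMul _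
  -- Step 4: entrywise bound on the difference of squared-distance matrices
  have hentry : ∀ i j : Fin n,
      ((sqDistMat X - sqDistMat Xstar) i j) ^ 2 ≤ 4 * d * f i j := by
    intro i j
    have ha0 := rdist_nonneg X i j
    have hb0 := rdist_nonneg Xstar i j
    have ha1 := rdist_le_sqrt_d hX i j
    have hb1 := rdist_le_sqrt_d hXstar i j
    have hsq : Real.sqrt d * Real.sqrt d = d :=
      Real.mul_self_sqrt (Nat.cast_nonneg d)
    have : (sqDistMat X - sqDistMat Xstar) i j
        = (rdist X i j - rdist Xstar i j) * (rdist X i j + rdist Xstar i j) := by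
      simp [sqDistMat]
      ring
    rw [this, mul_pow]
    have hsum : (rdist X i j + rdist Xstar i j) ^ 2 ≤ 4 * d := by
      nlinarith
    have := mul_le_mul_of_nonneg_left hsum (sq_nonneg (rdist X i j - rdist Xstar i j))
    calc (rdist X i j - rdist Xstar i j) ^ 2 * (rdist X i j + rdist Xstar i j) ^ 2
        ≤ (rdist X i j - rdist Xstar i j) ^ 2 * (4 * d) := this
      _ = 4 * d * f i j := by rw [hf]; ring
  have hB : frobSq (sqDistMat X - sqDistMat Xstar) ≤ 4 * d * (2 * P) := by
    have hsumb : frobSq (sqDistMat X - sqDistMat Xstar) ≤ ∑ i, ∑ j, 4 * d * f i j := by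
      refine Finset.sum_le_sum fun i _ => Finset.sum_le_sum fun j _ => hentry i j
    have hds : ∑ i, ∑ j, f i j = 2 * P := by
      apply doubleSum_eq_two_pairSum
      · intro i j; rw [hf]; simp only; rw [rdist_symm X, rdist_symm Xstar]
      · intro i; rw [hf]; simp [rdist, eDist]
    calc frobSq (sqDistMat X - sqDistMat Xstar) ≤ ∑ i, ∑ j, 4 * d * f i j := hsumb
      _ = 4 * d * ∑ i, ∑ j, f i j := by
          rw [Finset.mul_sum]; exact Finset.sum_congr rfl fun i _ => by rw [Finset.mul_sum]
      _ = 4 * d * (2 * P) := by rw [hds]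
  -- Step 5: identify the right-hand side
  have hRHS : numPairs n * distDiscrep X Xstar = P := by
    unfold distDiscrep
    rcases lt_or_ge n 2 with h | h
    · have hP0 : P = 0 := by
        rw [hP]
        unfold pairSum
        refine Finset.sum_eq_zero fun i _ => Finset.sum_eq_zero fun j _ => ?_
        have : ¬ i < j := by
          intro hij
          have hi := i.isLt
          have hj := j.isLt
          omega
        simp [this]
      rw [← hP, hP0, mul_zero, mul_zero]
    · have hn : numPairs n ≠ 0 := by
        unfold numPairs
        have h2 : (2 : ℝ) ≤ (n : ℝ) := by exact_mod_cast h
        have : 0 < (n : ℝ) * ((n : ℝ) - 1) / 2 := by nlinarith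
        exact ne_of_gt this
      rw [← hP, ← mul_assoc, mul_inv_cancel₀ hn, one_mul]
  calc frobSq (gramMat X - gramMat Xstar)
      = (1 / 4 : ℝ) * frobSq (centerMat n * (sqDistMat X - sqDistMat Xstar) * centerMat n) :=
        hscale
    _ ≤ (1 / 4 : ℝ) * (4 * d * (2 * P)) := by
        have := le_trans hc1 (le_trans hc2 hB)
        linarith
    _ = 2 * d * P := by ring
    _ = 2 * d * numPairs n * distDiscrep X Xstar := by rw [← hRHS]; ring
end
end

section
/- Stationary measure perturbation under uniform ergodicity (from the proof of Theorem 1). Let P and P₀ be Markov kernels on a measurable space S. Suppose P₀ is uniformly ergodic with invariant probability measure π, i.e., sup over x ∈ S of ‖δ_x P₀^m − π‖_TV → 0 as m → ∞. Suppose ε ≥ 0 satisfies sup over x ∈ S of ‖δ_x P^m − δ_x P₀^m‖_TV ≤ ε for all m ≥ 0. Then any invariant probability measure π̃ of P satisfies ‖π̃ − π‖_TV ≤ ε. -/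
open MeasureTheory ProbabilityTheory Filter

noncomputable section

section Aux
variable {S : Type*} [MeasurableSpace S]

lemma abs_sub_le_one {μ ν : Measure S} [IsProbabilityMeasure μ] [IsProbabilityMeasure ν]
    (A : Set S) : |(μ A).toReal - (ν A).toReal| ≤ 1 := by
  rw [abs_sub_le_iff]
  have h1 : (μ A).toReal ≤ 1 := by
    have := prob_le_one (μ := μ) (s := A)
    simpa using ENNReal.toReal_mono ENNReal.one_ne_top this
  have h2 : (ν A).toReal ≤ 1 := by
    have := prob_le_one (μ := ν) (s := A)
    simpa using ENNReal.toReal_mono ENNReal.one_ne_top this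
  constructor <;> nlinarith [ENNReal.toReal_nonneg (a := μ A), ENNReal.toReal_nonneg (a := ν A)]

lemma abs_le_tvDist {μ ν : Measure S} [IsProbabilityMeasure μ] [IsProbabilityMeasure ν]
    {A : Set S} (hA : MeasurableSet A) : |(μ A).toReal - (ν A).toReal| ≤ tvDist μ ν := by
  exact le_ciSup (f := fun B : {A : Set S // MeasurableSet A} => |(μ B).toReal - (ν B).toReal|)
    ⟨1, by rintro t ⟨B, rfl⟩; exact abs_sub_le_one _⟩ ⟨A, hA⟩

lemma tvDist_le_one {μ ν : Measure S} [IsProbabilityMeasure μ] [IsProbabilityMeasure ν] :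
    tvDist μ ν ≤ 1 :=
  ciSup_le fun B => abs_sub_le_one _

instance kIter_markov (P : Kernel S S) [IsMarkovKernel P] (m : ℕ) :
    IsMarkovKernel (kIter P m) := by
  induction m with
  | zero => exact inferInstanceAs (IsMarkovKernel Kernel.id)
  | succ m ih => exact inferInstanceAs (IsMarkovKernel (Kernel.comp P (kIter P m)))

lemma bind_kIter (P : Kernel S S) (μ : Measure S) (hμ : μ.bind (fun x => P x) = μ) (m : ℕ) :
    μ.bind (fun x => kIter P m x) = μ := by
  induction m with
  | zero =>
      simp only [kIter, Kernel.id_apply]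
      exact Measure.bind_dirac
  | succ m ih =>
      have : (fun x => kIter P (m+1) x) = fun x => (kIter P m x).bind (fun y => P y) := by
        funext x; simp [kIter, Kernel.comp_apply]
      rw [this, ← Measure.bind_bind (kIter P m).measurable.aemeasurable P.measurable.aemeasurable, ih, hμ]

end Aux

/-- from the proof of Theorem 1: stationary measure perturbation
under uniform ergodicity. -/
theorem stationary_measure_perturbation
    {S : Type*} [MeasurableSpace S]
    (P P₀ : Kernel S S) [IsMarkovKernel P] [IsMarkovKernel P₀]
    (π : Measure S) [IsProbabilityMeasure π]
    (hinv : π.bind (fun x => P₀ x) = π)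
    (herg : Tendsto (fun m : ℕ => ⨆ x : S, tvDist (kIter P₀ m x) π) atTop (nhds 0))
    (ε : ℝ) (hε : 0 ≤ ε)
    (hclose : ∀ (m : ℕ) (x : S), tvDist (kIter P m x) (kIter P₀ m x) ≤ ε)
    (πt : Measure S) [IsProbabilityMeasure πt]
    (hπt : πt.bind (fun x => P x) = πt) :
    tvDist πt π ≤ ε := by
  set c : ℕ → ℝ := fun m => ⨆ x : S, tvDist (kIter P₀ m x) π with hc
  apply ciSup_le
  rintro ⟨A, hA⟩
  -- for each m, |πt A - π A| ≤ ε + c m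
  have key : ∀ m : ℕ, |(πt A).toReal - (π A).toReal| ≤ ε + c m := by
    intro m
    have hbind := bind_kIter P πt hπt m
    have hmeas : Measurable fun x => ((kIter P m x) A).toReal :=
      ((kIter P m).measurable_coe hA).ennreal_toReal
    have hPA : (πt A).toReal = ∫ x, ((kIter P m x) A).toReal ∂πt := by
      conv_lhs => rw [← hbind]
      rw [Measure.bind_apply hA (kIter P m).measurable.aemeasurable]
      rw [integral_toReal ((kIter P m).measurable_coe hA).aemeasurable
        (Filter.Eventually.of_forall fun x => measure_lt_top _ _)]
    have hint : Integrable (fun x => ((kIter P m x) A).toReal) πt := by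
      apply Integrable.mono' (integrable_const (1:ℝ)) hmeas.aestronglyMeasurable
      filter_upwards with x
      rw [Real.norm_eq_abs, abs_of_nonneg ENNReal.toReal_nonneg]
      exact ENNReal.toReal_le_of_le_ofReal one_pos.le (by simpa using prob_le_one)
    have hπint : (π A).toReal = ∫ _x, (π A).toReal ∂πt := by simp
    rw [hPA, hπint, ← integral_sub hint (integrable_const _)]
    calc |∫ x, (((kIter P m x) A).toReal - (π A).toReal) ∂πt|
        ≤ ∫ x, |((kIter P m x) A).toReal - (π A).toReal| ∂πt := by
          simpa [Real.norm_eq_abs] using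
            norm_integral_le_integral_norm (μ := πt)
              (f := fun x => ((kIter P m x) A).toReal - (π A).toReal)
      _ ≤ ∫ _x, (ε + c m) ∂πt := by
          apply integral_mono (hint.sub (integrable_const _)).abs (integrable_const _)
          intro x
          have h1 : |((kIter P m x) A).toReal - ((kIter P₀ m x) A).toReal| ≤ ε :=
            le_trans (abs_le_tvDist hA) (hclose m x)
          have h2 : |((kIter P₀ m x) A).toReal - (π A).toReal| ≤ c m := by
            refine le_trans (abs_le_tvDist hA)
              (le_ciSup (f := fun y : S => tvDist (kIter P₀ m y) π) ⟨1, ?_⟩ x)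
            rintro t ⟨y, rfl⟩; exact tvDist_le_one
          calc |((kIter P m x) A).toReal - (π A).toReal|
              ≤ |((kIter P m x) A).toReal - ((kIter P₀ m x) A).toReal|
                + |((kIter P₀ m x) A).toReal - (π A).toReal| := abs_sub_le _ _ _
            _ ≤ ε + c m := add_le_add h1 h2
      _ = ε + c m := by simp
  have htend : Tendsto (fun m => ε + c m) atTop (nhds ε) := by
    simpa using (tendsto_const_nhds (x := ε)).add herg
  exact ge_of_tendsto htend (Filter.Eventually.of_forall key)
end
end
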